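/- arXiv:0910.5158 — 16 statements merged into one kernel-verified Lean document; each statement's English description precedes it below -/
import Mathlib

section
/- Let p be a prime, n ≥ 1, K a field, and α ∈ Kˣ with α ≠ 1 and α^p = 1. Let Γ = (ZMod p)ⁿ as an additive group. Then for every commutation factor ε on Γ over K there exists a unique ZMod p-bilinear form φ : Γ × Γ → ZMod p such that ε(i,j) = α^(φ(i,j)) for all i, j ∈ Γ (the exponent being the canonical integer representative of φ(i,j), which is well defined since α^p = 1). Moreover φ is symmetric if p = 2, and φ is alternating (φ(i,i) = 0 for all i) if p ≥ 3; in the latter case ε is proper. -/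
/-!
A commutation factor is biadditive, so its values are killed by `p` and lie in the group of
`p`-th roots of unity of `K`, which `α` generates. Taking discrete logarithms to the base `α`
turns `ε` into a biadditive, hence `ZMod p`-bilinear, form `φ`, unique because the logarithm is.
The relation `ε i j * ε j i = 1` says `φ i j + φ j i = 0`: for `p = 2` this is symmetry, and for
odd `p` it gives `2 • φ i i = 0`, so `φ` is alternating and `ε i i = α ^ 0 = 1`.
-/

/-- A commutation factor on an abelian group `Γ` over a field `K`. -/
def IsCommFactor {Γ K : Type*} [AddCommGroup Γ] [Field K] (ε : Γ → Γ → Kˣ) : Prop :=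
  (∀ i j, ε i j * ε j i = 1) ∧
  (∀ i j k, ε i (j + k) = ε i j * ε i k) ∧
  (∀ i j k, ε (i + j) k = ε i k * ε j k)

namespace IsPrimitiveRoot

variable {p : ℕ} [NeZero p]

section CommMonoid

variable {M : Type*} [CommMonoid M] {α : M}

lemma pow_val_add (hα : IsPrimitiveRoot α p) (a b : ZMod p) :
    α ^ (a + b).val = α ^ a.val * α ^ b.val := by
  rw [ZMod.val_add, ← pow_add]
  exact (hα.eq_orderOf ▸ pow_mod_orderOf α _ :)

lemma pow_val_injective (hα : IsPrimitiveRoot α p) :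
    Function.Injective fun a : ZMod p => α ^ a.val :=
  fun a b h => ZMod.val_injective p (hα.pow_inj a.val_lt b.val_lt h)

end CommMonoid

lemma exists_pow_val_eq {R : Type*} [CommRing R] [IsDomain R] {α x : Rˣ}
    (hα : IsPrimitiveRoot α p) (hx : x ^ p = 1) : ∃ a : ZMod p, α ^ a.val = x := by
  obtain ⟨i, hip, hi⟩ := (coe_units_iff.mpr hα).eq_pow_of_pow_eq_one (congrArg Units.val hx)
  exact ⟨i, Units.ext <| by simpa [ZMod.val_cast_of_lt hip] using hi⟩

end IsPrimitiveRoot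

namespace IsCommFactor

variable {Γ K : Type*} [AddCommGroup Γ] [Field K] {ε : Γ → Γ → Kˣ}

lemma map_zero_left (hε : IsCommFactor ε) (j : Γ) : ε 0 j = 1 := by
  simpa using hε.2.2 0 0 j

lemma map_nsmul_left (hε : IsCommFactor ε) (m : ℕ) (i j : Γ) : ε (m • i) j = ε i j ^ m := by
  induction m with
  | zero => simpa using hε.map_zero_left j
  | succ m ih => rw [succ_nsmul, hε.2.2, ih, pow_succ]

lemma pow_eq_one (hε : IsCommFactor ε) (p : ℕ) [Module (ZMod p) Γ] (i j : Γ) :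
    ε i j ^ p = 1 := by
  rw [← hε.map_nsmul_left, ← Nat.cast_smul_eq_nsmul (ZMod p), ZMod.natCast_self, zero_smul,
    hε.map_zero_left]

variable {p : ℕ} [NeZero p] {α : Kˣ}

lemma exists_linearMap₂ [Module (ZMod p) Γ] (hε : IsCommFactor ε) (hα : IsPrimitiveRoot α p) :
    ∃ φ : Γ →ₗ[ZMod p] Γ →ₗ[ZMod p] ZMod p, ∀ i j, ε i j = α ^ (φ i j).val := by
  choose f hf using fun i j => hα.exists_pow_val_eq (hε.pow_eq_one p i j)
  have map_add_right (i j k : Γ) : f i (j + k) = f i j + f i k :=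
    hα.pow_val_injective <| by simp only [hα.pow_val_add, hf, hε.2.1]
  have map_add_left (i j k : Γ) : f (i + j) k = f i k + f j k :=
    hα.pow_val_injective <| by simp only [hα.pow_val_add, hf, hε.2.2]
  let φ : Γ →+ Γ →+ ZMod p :=
    .mk' (fun i => .mk' (f i) (map_add_right i)) fun i j => AddMonoidHom.ext (map_add_left i j)
  exact ⟨((AddMonoidHom.toZModLinearMapEquiv p).toAddMonoidHom.comp φ).toZModLinearMap p,
    fun i j => (hf i j).symm⟩

lemma add_swap_eq_zero (hε : IsCommFactor ε) (hα : IsPrimitiveRoot α p) {φ : Γ → Γ → ZMod p}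
    (hφ : ∀ i j, ε i j = α ^ (φ i j).val) (i j : Γ) :
    φ i j + φ j i = 0 :=
  hα.pow_val_injective <| by simp only [hα.pow_val_add, ← hφ, hε.1, ZMod.val_zero, pow_zero]

lemma apply_self_eq_zero [Fact p.Prime] (hp : p ≠ 2) (hε : IsCommFactor ε)
    (hα : IsPrimitiveRoot α p) {φ : Γ → Γ → ZMod p} (hφ : ∀ i j, ε i j = α ^ (φ i j).val)
    (i : Γ) : φ i i = 0 :=
  (Ring.eq_self_iff_eq_zero_of_char_ne_two (by rwa [ZMod.ringChar_zmod_n])).mp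
    (neg_eq_of_add_eq_zero_left (hε.add_swap_eq_zero hα hφ i i))

lemma map_self_eq_one [Module (ZMod p) Γ] [Fact p.Prime] (hp : p ≠ 2) (hε : IsCommFactor ε)
    (hα : IsPrimitiveRoot α p) (i : Γ) : ε i i = 1 := by
  obtain ⟨φ, hφ⟩ := hε.exists_linearMap₂ hα
  rw [hφ, hε.apply_self_eq_zero hp hα hφ i, ZMod.val_zero, pow_zero]

end IsCommFactor

theorem statement2_general {K : Type*} [Field K] (p n : ℕ) [Fact p.Prime]
    (α : Kˣ) (hα1 : α ≠ 1) (hαp : α ^ p = 1)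
    (ε : (Fin n → ZMod p) → (Fin n → ZMod p) → Kˣ)
    (hε : IsCommFactor ε) :
    (∃! φ : (Fin n → ZMod p) →ₗ[ZMod p] (Fin n → ZMod p) →ₗ[ZMod p] ZMod p,
        ∀ i j, ε i j = α ^ (φ i j).val) ∧
    (∀ φ : (Fin n → ZMod p) →ₗ[ZMod p] (Fin n → ZMod p) →ₗ[ZMod p] ZMod p,
        (∀ i j, ε i j = α ^ (φ i j).val) →
        ((p = 2 → ∀ i j, φ i j = φ j i) ∧ (3 ≤ p → ∀ i, φ i i = 0))) ∧
    (3 ≤ p → ∀ i, ε i i = 1) := by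
  have hα : IsPrimitiveRoot α p := IsPrimitiveRoot.iff_orderOf.mpr (orderOf_eq_prime hαp hα1)
  obtain ⟨φ, hφ⟩ := hε.exists_linearMap₂ hα
  refine ⟨⟨φ, hφ, fun ψ hψ => ?unique⟩, fun ψ hψ => ⟨?symm, ?alt⟩,
    fun hp => hε.map_self_eq_one (by omega) hα⟩
  case unique => exact LinearMap.ext₂ fun i j => hα.pow_val_injective ((hψ i j).symm.trans (hφ i j))
  case symm =>
    rintro rfl i j
    exact CharTwo.add_eq_zero.mp (hε.add_swap_eq_zero hα hψ i j)
  case alt => exact fun hp => hε.apply_self_eq_zero (by omega) hα hψ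

theorem statement2 {K : Type*} [Field K] (p n : ℕ) [Fact p.Prime] (hn : 1 ≤ n)
    (α : Kˣ) (hα1 : α ≠ 1) (hαp : α ^ p = 1)
    (ε : (Fin n → ZMod p) → (Fin n → ZMod p) → Kˣ)
    (hε : IsCommFactor ε) :
    (∃! φ : (Fin n → ZMod p) →ₗ[ZMod p] (Fin n → ZMod p) →ₗ[ZMod p] ZMod p,
        ∀ i j, ε i j = α ^ (φ i j).val) ∧
    (∀ φ : (Fin n → ZMod p) →ₗ[ZMod p] (Fin n → ZMod p) →ₗ[ZMod p] ZMod p,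
        (∀ i j, ε i j = α ^ (φ i j).val) →
        ((p = 2 → ∀ i j, φ i j = φ j i) ∧ (3 ≤ p → ∀ i, φ i i = 0))) ∧
    (3 ≤ p → ∀ i, ε i i = 1) :=
  statement2_general p n α hα1 hαp ε hε
end

section
/- Let Γ be an abelian group, K a field, and σ a factor set on Γ over K. Then the map ε_σ(i,j) = σ(i,j)·σ(j,i)⁻¹ is a proper commutation factor on Γ over K: it satisfies ε_σ(i,j)·ε_σ(j,i) = 1, ε_σ(i, j+k) = ε_σ(i,j)·ε_σ(i,k), ε_σ(i+j, k) = ε_σ(i,k)·ε_σ(j,k), and ε_σ(i,i) = 1 for all i, j, k ∈ Γ. -/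
theorem statement3 {Γ K : Type*} [AddCommGroup Γ] [Field K] (σ : Γ → Γ → Kˣ)
    (hσ : ∀ i j k, σ i (j + k) * σ j k = σ i j * σ (i + j) k) :
    (∀ i j : Γ, (σ i j * (σ j i)⁻¹) * (σ j i * (σ i j)⁻¹) = 1) ∧
    (∀ i j k : Γ, σ i (j + k) * (σ (j + k) i)⁻¹ =
      (σ i j * (σ j i)⁻¹) * (σ i k * (σ k i)⁻¹)) ∧
    (∀ i j k : Γ, σ (i + j) k * (σ k (i + j))⁻¹ =
      (σ i k * (σ k i)⁻¹) * (σ j k * (σ k j)⁻¹)) ∧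
    (∀ i : Γ, σ i i * (σ i i)⁻¹ = 1) := by
  have key : ∀ i j k : Γ, σ i (j + k) * (σ (j + k) i)⁻¹ =
      (σ i j * (σ j i)⁻¹) * (σ i k * (σ k i)⁻¹) := by
    intro i j k
    have h1 : σ i (j + k) = σ i j * σ (i + j) k * (σ j k)⁻¹ := by
      rw [eq_mul_inv_iff_mul_eq]; exact hσ i j k
    have h2 : σ (j + k) i = σ j (i + k) * σ k i * (σ j k)⁻¹ := by
      have h := hσ j k i
      rw [add_comm k i] at h
      rw [eq_mul_inv_iff_mul_eq, mul_comm]; exact h.symm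
    have h3 : σ (i + j) k = σ j (i + k) * σ i k * (σ j i)⁻¹ := by
      have h := hσ j i k
      rw [add_comm j i] at h
      rw [eq_mul_inv_iff_mul_eq, mul_comm]; exact h.symm
    rw [h1, h2, h3]
    apply Units.ext
    push_cast
    field_simp
  refine ⟨fun i j => by group, key, fun i j k => ?_, fun i => by group⟩
  have h2 := key k i j
  have h : σ (i + j) k * (σ k (i + j))⁻¹ = (σ k (i + j) * (σ (i + j) k)⁻¹)⁻¹ := by group
  rw [h, h2]
  apply Units.ext
  push_cast
  field_simp
end

section
/- Let Γ be a finitely generated abelian group, K a field, and ε a proper commutation factor on Γ over K. Then there exists a factor set σ on Γ over K such that ε(i,j) = σ(i,j)·σ(j,i)⁻¹ for all i, j ∈ Γ. -/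
/-- The property that every proper commutation factor on `Γ` over `K` admits a
biadditive "square root modulo symmetry". -/
def HasFactorSet (K : Type*) [Field K] (Γ : Type*) [AddCommGroup Γ] : Prop :=
  ∀ ε : Γ → Γ → Kˣ, IsCommFactor ε → (∀ i : Γ, ε i i = 1) →
    ∃ σ : Γ → Γ → Kˣ,
      (∀ i j k, σ i (j + k) = σ i j * σ i k) ∧
      (∀ i j k, σ (i + j) k = σ i k * σ j k) ∧
      (∀ i j, ε i j = σ i j * (σ j i)⁻¹)

section Helpers

variable {K : Type*} [Field K] {Γ : Type*} [AddCommGroup Γ]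

theorem IsCommFactor.zsmul_left {ε : Γ → Γ → Kˣ} (hε : IsCommFactor ε)
    (n : ℤ) (g y : Γ) : ε (n • g) y = ε g y ^ n := by
  let f : Γ →+ Additive Kˣ :=
    AddMonoidHom.mk' (fun x => Additive.ofMul (ε x y))
      (fun a b => congrArg Additive.ofMul (hε.2.2 a b y))
  have h : f (n • g) = n • f g := map_zsmul f n g
  have h2 : Additive.toMul (f (n • g)) = Additive.toMul (n • f g) := congrArg _ h
  rw [toMul_zsmul] at h2
  simpa [f] using h2

theorem IsCommFactor.zsmul_right {ε : Γ → Γ → Kˣ} (hε : IsCommFactor ε)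
    (n : ℤ) (y g : Γ) : ε y (n • g) = ε y g ^ n := by
  let f : Γ →+ Additive Kˣ :=
    AddMonoidHom.mk' (fun x => Additive.ofMul (ε y x))
      (fun a b => congrArg Additive.ofMul (hε.2.1 y a b))
  have h : f (n • g) = n • f g := map_zsmul f n g
  have h2 : Additive.toMul (f (n • g)) = Additive.toMul (n • f g) := congrArg _ h
  rw [toMul_zsmul] at h2
  simpa [f] using h2

theorem hasFactorSet_of_isAddCyclic [IsAddCyclic Γ] : HasFactorSet K Γ := by
  intro ε hε hp
  refine ⟨fun _ _ => 1, by simp, by simp, fun i j => ?_⟩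
  obtain ⟨g, hg⟩ := exists_zsmul_surjective Γ
  obtain ⟨a, ha⟩ := hg i
  obtain ⟨b, hb⟩ := hg j
  have : ε i j = (ε g g ^ b) ^ a := by
    rw [← ha, ← hb, hε.zsmul_left, hε.zsmul_right]
  simp [this, hp g]

theorem HasFactorSet.of_addEquiv {Γ' : Type*} [AddCommGroup Γ']
    (e : Γ ≃+ Γ') (h : HasFactorSet K Γ') : HasFactorSet K Γ := by
  intro ε hε hp
  obtain ⟨σ, h1, h2, h3⟩ := h (fun i j => ε (e.symm i) (e.symm j))
    ⟨fun i j => hε.1 _ _,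
     fun i j k => by
       show ε (e.symm i) (e.symm (j + k)) = ε (e.symm i) (e.symm j) * ε (e.symm i) (e.symm k)
       rw [map_add]; exact hε.2.1 _ _ _,
     fun i j k => by
       show ε (e.symm (i + j)) (e.symm k) = ε (e.symm i) (e.symm k) * ε (e.symm j) (e.symm k)
       rw [map_add]; exact hε.2.2 _ _ _⟩
    (fun i => hp _)
  refine ⟨fun i j => σ (e i) (e j), fun i j k => by beta_reduce; rw [map_add]; exact h1 _ _ _,
    fun i j k => by beta_reduce; rw [map_add]; exact h2 _ _ _, fun i j => ?_⟩
  simpa using h3 (e i) (e j)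

theorem hasFactorSet_of_subsingleton [Subsingleton Γ] : HasFactorSet K Γ := by
  intro ε hε hp
  refine ⟨fun _ _ => 1, by simp, by simp, fun i j => ?_⟩
  rw [Subsingleton.elim j i]
  simp [hp i]

theorem HasFactorSet.prod {Γ₁ Γ₂ : Type*} [AddCommGroup Γ₁] [AddCommGroup Γ₂]
    (h1 : HasFactorSet K Γ₁) (h2 : HasFactorSet K Γ₂) : HasFactorSet K (Γ₁ × Γ₂) := by
  intro ε hε hp
  obtain ⟨σ₁, ha1, hb1, hc1⟩ := h1 (fun a b => ε (a, 0) (b, 0))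
    ⟨fun a b => hε.1 _ _,
     fun a b c => by
       have : ((b + c, (0 : Γ₂)) : Γ₁ × Γ₂) = (b, 0) + (c, 0) := by simp
       beta_reduce; rw [this]; exact hε.2.1 _ _ _,
     fun a b c => by
       have : ((a + b, (0 : Γ₂)) : Γ₁ × Γ₂) = (a, 0) + (b, 0) := by simp
       beta_reduce; rw [this]; exact hε.2.2 _ _ _⟩
    (fun a => hp _)
  obtain ⟨σ₂, ha2, hb2, hc2⟩ := h2 (fun a b => ε (0, a) (0, b))
    ⟨fun a b => hε.1 _ _,
     fun a b c => by
       have : (((0 : Γ₁), b + c) : Γ₁ × Γ₂) = (0, b) + (0, c) := by simp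
       beta_reduce; rw [this]; exact hε.2.1 _ _ _,
     fun a b c => by
       have : (((0 : Γ₁), a + b) : Γ₁ × Γ₂) = (0, a) + (0, b) := by simp
       beta_reduce; rw [this]; exact hε.2.2 _ _ _⟩
    (fun a => hp _)
  have hcl : ∀ a b x, ε (a + b, (0:Γ₂)) ((0:Γ₁), x) = ε (a, 0) (0, x) * ε (b, 0) (0, x) := by
    intro a b x
    have h : ((a + b, (0 : Γ₂)) : Γ₁ × Γ₂) = (a, 0) + (b, 0) := by simp
    rw [h]; exact hε.2.2 _ _ _
  have hcr : ∀ x a b, ε (x, (0:Γ₂)) ((0:Γ₁), a + b) = ε (x, 0) (0, a) * ε (x, 0) (0, b) := by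
    intro x a b
    have h : (((0 : Γ₁), a + b) : Γ₁ × Γ₂) = (0, a) + (0, b) := by simp
    rw [h]; exact hε.2.1 _ _ _
  refine ⟨fun x y => σ₁ x.1 y.1 * σ₂ x.2 y.2 * ε (x.1, 0) (0, y.2), ?_, ?_, ?_⟩
  · intro i j k
    beta_reduce
    simp only [Prod.fst_add, Prod.snd_add, ha1, ha2, hcr]
    simp [mul_assoc, mul_comm, mul_left_comm]
  · intro i j k
    beta_reduce
    simp only [Prod.fst_add, Prod.snd_add, hb1, hb2, hcl]
    simp [mul_assoc, mul_comm, mul_left_comm]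
  · intro i j
    beta_reduce
    have hsplit : ε i j = ε (i.1, 0) (j.1, 0) * ε (i.1, 0) (0, j.2) *
        (ε (0, i.2) (j.1, 0) * ε (0, i.2) (0, j.2)) := by
      have hi : i = ((i.1, (0 : Γ₂)) : Γ₁ × Γ₂) + ((0 : Γ₁), i.2) := by simp
      have hj : j = ((j.1, (0 : Γ₂)) : Γ₁ × Γ₂) + ((0 : Γ₁), j.2) := by simp
      calc ε i j = ε ((i.1, (0:Γ₂)) + ((0:Γ₁), i.2)) (((j.1, (0:Γ₂)) + ((0:Γ₁), j.2))) := by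
            rw [← hi, ← hj]
        _ = _ := by rw [hε.2.2, hε.2.1, hε.2.1]
    have hanti : ε ((0:Γ₁), i.2) (j.1, (0:Γ₂)) = (ε (j.1, (0:Γ₂)) ((0:Γ₁), i.2))⁻¹ := by
      rw [eq_inv_iff_mul_eq_one, mul_comm]
      exact hε.1 _ _
    rw [hsplit, hc1, hc2, hanti]
    simp [mul_inv, mul_assoc, mul_comm, mul_left_comm]

theorem hasFactorSet_pi {ι : Type} [Fintype ι] (G : ι → Type) [∀ i, AddCommGroup (G i)]
    (h : ∀ i, HasFactorSet K (G i)) : HasFactorSet K (∀ i, G i) := by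
  revert G
  refine Fintype.induction_empty_option
    (P := fun ι _ => ∀ (G : ι → Type) [∀ i, AddCommGroup (G i)],
      (∀ i, HasFactorSet K (G i)) → HasFactorSet K (∀ i, G i)) ?_ ?_ ?_ ι
  · intro α β _ e hα G _ hG
    have h' := hα (fun a => G (e a)) (fun a => hG (e a))
    have E : (∀ b, G b) ≃+ (∀ a, G (e a)) :=
      (LinearEquiv.piCongrLeft ℤ G e).symm.toAddEquiv
    exact HasFactorSet.of_addEquiv E h'
  · intro G _ _
    exact hasFactorSet_of_subsingleton
  · intro α _ ih G _ hG
    have hprod : HasFactorSet K (G none × ∀ a, G (some a)) :=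
      HasFactorSet.prod (hG none) (ih (fun a => G (some a)) (fun a => hG (some a)))
    have E : (∀ i, G i) ≃+ (G none × ∀ a, G (some a)) :=
      { toFun := fun f => (f none, fun a => f (some a))
        invFun := fun p i => Option.rec p.1 p.2 i
        left_inv := fun f => by funext i; cases i <;> rfl
        right_inv := fun p => rfl
        map_add' := fun f g => rfl }
    exact HasFactorSet.of_addEquiv E hprod

end Helpers

theorem statement4 {Γ K : Type*} [AddCommGroup Γ] [AddGroup.FG Γ] [Field K]
    (ε : Γ → Γ → Kˣ) (hε : IsCommFactor ε) (hproper : ∀ i : Γ, ε i i = 1) :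
    ∃ σ : Γ → Γ → Kˣ,
      (∀ i j k, σ i (j + k) * σ j k = σ i j * σ (i + j) k) ∧
      (∀ i j, ε i j = σ i j * (σ j i)⁻¹) := by
  obtain ⟨n, ι, fι, p, hp, e, ⟨f⟩⟩ := AddCommGroup.equiv_free_prod_directSum_zmod Γ
  have hfree : HasFactorSet K (Fin n →₀ ℤ) :=
    HasFactorSet.of_addEquiv Finsupp.addEquivFunOnFinite
      (hasFactorSet_pi (fun _ : Fin n => ℤ) (fun _ => hasFactorSet_of_isAddCyclic))
  have htorE : (DirectSum ι fun i => ZMod (p i ^ e i)) ≃+ (∀ i : ι, ZMod (p i ^ e i)) :=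
    { DFinsupp.equivFunOnFintype with map_add' := fun f g => rfl }
  have htor : HasFactorSet K (DirectSum ι fun i => ZMod (p i ^ e i)) :=
    HasFactorSet.of_addEquiv htorE
      (hasFactorSet_pi (fun i => ZMod (p i ^ e i)) (fun _ => hasFactorSet_of_isAddCyclic))
  have hΓ : HasFactorSet K Γ := HasFactorSet.of_addEquiv f (hfree.prod htor)
  obtain ⟨σ, h1, h2, h3⟩ := hΓ ε hε hproper
  refine ⟨σ, fun i j k => ?_, h3⟩
  rw [h1, h2]
  simp [mul_assoc, mul_comm, mul_left_comm]
end

section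
/- Let Γ be a finitely generated abelian group and K an algebraically closed field. If σ and σ' are factor sets on Γ over K such that σ(i,j)·σ(j,i)⁻¹ = σ'(i,j)·σ'(j,i)⁻¹ for all i, j ∈ Γ, then σ and σ' are equivalent: there exists a map ρ : Γ → Kˣ such that σ'(i,j) = σ(i,j)·ρ(i+j)·ρ(i)⁻¹·ρ(j)⁻¹ for all i, j ∈ Γ. Equivalently, every proper commutation factor on Γ over K is constructed from a unique multiplier. -/
/-!
The quotient `τ = σ' / σ` is a 2-cocycle, and it is symmetric because `σ` and `σ'` have the same
commutation factor. A symmetric 2-cocycle with values in an abelian group `A` defines an abelian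
extension `0 → A → E → Γ → 0`. When `A` is divisible it is an injective `ℤ`-module, so this
extension splits, and a retraction `E → A` exhibits `τ` as a coboundary. For `K` algebraically
closed, `Kˣ` is divisible.
-/

structure SymmetricCocycle (Γ A : Type*) [AddCommGroup Γ] [AddCommGroup A] where
  toFun : Γ → Γ → A
  cocycle : ∀ i j k, toFun i (j + k) + toFun j k = toFun i j + toFun (i + j) k
  symm : ∀ i j, toFun i j = toFun j i

namespace SymmetricCocycle

variable {Γ A : Type*} [AddCommGroup Γ] [AddCommGroup A]

instance : CoeFun (SymmetricCocycle Γ A) (fun _ => Γ → Γ → A) := ⟨toFun⟩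

variable (c : SymmetricCocycle Γ A)

lemma zero_left (i : Γ) : c 0 i = c 0 0 := by
  simpa using c.cocycle 0 0 i

lemma zero_right (i : Γ) : c i 0 = c 0 0 := by
  rw [c.symm, zero_left]

def Extension (_c : SymmetricCocycle Γ A) : Type _ := A × Γ

instance : Add c.Extension := ⟨fun x y => (x.1 + y.1 + c x.2 y.2, x.2 + y.2)⟩

-- `c` need not be normalized, so the zero is shifted to `(-c 0 0, 0)`.
instance : Zero c.Extension := ⟨(-c 0 0, 0)⟩

instance : Neg c.Extension := ⟨fun x => (-x.1 - c x.2 (-x.2) - c 0 0, -x.2)⟩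

instance : AddCommGroup c.Extension where
  nsmul := nsmulRec
  zsmul := zsmulRec
  add_assoc x y z := by
    refine Prod.ext ?_ (add_assoc x.2 y.2 z.2)
    show x.1 + y.1 + c x.2 y.2 + z.1 + c (x.2 + y.2) z.2
      = x.1 + (y.1 + z.1 + c y.2 z.2) + c x.2 (y.2 + z.2)
    calc _ = x.1 + y.1 + z.1 + (c x.2 y.2 + c (x.2 + y.2) z.2) := by abel
      _ = x.1 + y.1 + z.1 + (c x.2 (y.2 + z.2) + c y.2 z.2) := by rw [c.cocycle]
      _ = _ := by abel
  zero_add x := by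
    refine Prod.ext ?_ (zero_add x.2)
    show -c 0 0 + x.1 + c 0 x.2 = x.1
    rw [c.zero_left x.2]
    abel
  add_zero x := by
    refine Prod.ext ?_ (add_zero x.2)
    show x.1 + -c 0 0 + c x.2 0 = x.1
    rw [c.zero_right x.2]
    abel
  neg_add_cancel x := by
    refine Prod.ext ?_ (neg_add_cancel x.2)
    show -x.1 - c x.2 (-x.2) - c 0 0 + x.1 + c (-x.2) x.2 = -c 0 0
    rw [c.symm (-x.2)]
    abel
  add_comm x y := by
    refine Prod.ext ?_ (add_comm x.2 y.2)
    show x.1 + y.1 + c x.2 y.2 = y.1 + x.1 + c y.2 x.2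
    rw [add_comm x.1, c.symm]

def inl : A →+ c.Extension :=
  AddMonoidHom.mk' (fun a => (a - c 0 0, 0)) fun a b => by
    refine Prod.ext ?_ (add_zero 0).symm
    show a + b - c 0 0 = a - c 0 0 + (b - c 0 0) + c 0 0
    abel

lemma inl_injective : Function.Injective c.inl := fun a b h =>
  sub_left_injective (congrArg Prod.fst h : a - c 0 0 = b - c 0 0)

def toExtension (g : Γ) : c.Extension := (0, g)

lemma toExtension_add_toExtension (i j : Γ) :
    c.toExtension i + c.toExtension j = c.inl (c i j) + c.toExtension (i + j) := by
  refine Prod.ext ?_ (zero_add (i + j)).symm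
  show 0 + 0 + c i j = c i j - c 0 0 + 0 + c 0 (i + j)
  rw [c.zero_left (i + j)]
  abel

theorem exists_eq_coboundary [DivisibleBy A ℤ] :
    ∃ f : Γ → A, ∀ i j, c i j = f i + f j - f (i + j) := by
  obtain ⟨r, hr⟩ := (Module.Baer.of_divisible A).extension_property_addMonoidHom
    c.inl c.inl_injective (AddMonoidHom.id A)
  refine ⟨fun g => r (c.toExtension g), fun i j => ?_⟩
  have h := congrArg r (c.toExtension_add_toExtension i j)
  rw [map_add, map_add, ← AddMonoidHom.comp_apply, hr, AddMonoidHom.id_apply] at h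
  exact eq_sub_of_add_eq h.symm

end SymmetricCocycle

lemma IsAlgClosed.surjective_pow_units (K : Type*) [Field K] [IsAlgClosed K] {n : ℕ}
    (hn : n ≠ 0) : Function.Surjective fun u : Kˣ => u ^ n := fun u => by
  obtain ⟨z, hz⟩ := IsAlgClosed.exists_pow_nat_eq (u : K) (Nat.pos_of_ne_zero hn)
  have hz0 : z ≠ 0 := by
    rintro rfl
    exact u.ne_zero (hz.symm.trans (zero_pow hn))
  exact ⟨Units.mk0 z hz0, Units.ext (by simpa using hz)⟩

noncomputable instance IsAlgClosed.divisibleByAdditiveUnits (K : Type*) [Field K]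
    [IsAlgClosed K] : DivisibleBy (Additive Kˣ) ℤ :=
  letI : DivisibleBy (Additive Kˣ) ℕ := divisibleByOfSMulRightSurj _ _ fun hn u =>
    IsAlgClosed.surjective_pow_units K hn u.toMul
  AddGroup.divisibleByIntOfDivisibleByNat _

theorem statement5_general {Γ K : Type*} [AddCommGroup Γ] [Field K] [IsAlgClosed K]
    (σ σ' : Γ → Γ → Kˣ)
    (hσ : ∀ i j k, σ i (j + k) * σ j k = σ i j * σ (i + j) k)
    (hσ' : ∀ i j k, σ' i (j + k) * σ' j k = σ' i j * σ' (i + j) k)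
    (heq : ∀ i j, σ i j * (σ j i)⁻¹ = σ' i j * (σ' j i)⁻¹) :
    ∃ ρ : Γ → Kˣ, ∀ i j, σ' i j = σ i j * ρ (i + j) * (ρ i)⁻¹ * (ρ j)⁻¹ := by
  let τ : SymmetricCocycle Γ (Additive Kˣ) :=
    { toFun := fun i j => Additive.ofMul (σ' i j / σ i j)
      cocycle := fun i j k => by
        simp only [← ofMul_mul, div_mul_div_comm, hσ, hσ']
      symm := fun i j => congrArg Additive.ofMul <| by
        rw [div_eq_div_iff_div_eq_div]
        simpa only [div_eq_mul_inv] using (heq i j).symm }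
  obtain ⟨f, hf⟩ := τ.exists_eq_coboundary
  refine ⟨fun g => (f g).toMul⁻¹, fun i j => ?_⟩
  have h : σ' i j / σ i j = (f i).toMul * (f j).toMul / (f (i + j)).toMul :=
    congrArg Additive.toMul (hf i j)
  rw [div_eq_iff_eq_mul'] at h
  rw [h]
  simp only [inv_inv, div_eq_mul_inv]
  ac_rfl

theorem statement5 {Γ K : Type*} [AddCommGroup Γ] [AddGroup.FG Γ] [Field K] [IsAlgClosed K]
    (σ σ' : Γ → Γ → Kˣ)
    (hσ : ∀ i j k, σ i (j + k) * σ j k = σ i j * σ (i + j) k)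
    (hσ' : ∀ i j k, σ' i (j + k) * σ' j k = σ' i j * σ' (i + j) k)
    (heq : ∀ i j, σ i j * (σ j i)⁻¹ = σ' i j * (σ' j i)⁻¹) :
    ∃ ρ : Γ → Kˣ, ∀ i j, σ' i j = σ i j * ρ (i + j) * (ρ i)⁻¹ * (ρ j)⁻¹ :=
  statement5_general σ σ' hσ hσ' heq
end

section
/- Let ε be a commutation factor on an abelian group Γ over a field K. Define s(ε) : Γ × Γ → Kˣ by s(ε)(i,j) = −1 if ε(i,i) = −1 and ε(j,j) = −1, and s(ε)(i,j) = 1 otherwise. Then s(ε) is a commutation factor on Γ over K, and the pointwise product (i,j) ↦ s(ε)(i,j)·ε(i,j) is a proper commutation factor on Γ over K. -/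
open Classical in
/-- The signature factor `s(ε)` of a commutation factor `ε`. -/
noncomputable def signFactor {Γ K : Type*} [AddCommGroup Γ] [Field K]
    (ε : Γ → Γ → Kˣ) : Γ → Γ → Kˣ :=
  fun i j => if ε i i = -1 ∧ ε j j = -1 then -1 else 1

lemma mul_commFactor {Γ K : Type*} [AddCommGroup Γ] [Field K] {ε ε' : Γ → Γ → Kˣ}
    (h : IsCommFactor ε) (h' : IsCommFactor ε') :
    IsCommFactor (fun i j => ε i j * ε' i j) := by
  obtain ⟨h1, h2, h3⟩ := h
  obtain ⟨h1', h2', h3'⟩ := h'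
  refine ⟨fun i j => ?_, fun i j k => ?_, fun i j k => ?_⟩
  · show ε i j * ε' i j * (ε j i * ε' j i) = 1
    rw [mul_mul_mul_comm, h1, h1', one_mul]
  · show ε i (j + k) * ε' i (j + k) = ε i j * ε' i j * (ε i k * ε' i k)
    rw [h2, h2', mul_mul_mul_comm]
  · show ε (i + j) k * ε' (i + j) k = ε i k * ε' i k * (ε j k * ε' j k)
    rw [h3, h3', mul_mul_mul_comm]

lemma diag_pm {Γ K : Type*} [AddCommGroup Γ] [Field K] {ε : Γ → Γ → Kˣ}
    (hε : IsCommFactor ε) (i : Γ) : ε i i = 1 ∨ ε i i = -1 := by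
  have h := hε.1 i i
  have h' : (ε i i : K) * (ε i i : K) = 1 := by
    have := congrArg Units.val h
    simpa using this
  rcases mul_self_eq_one_iff.mp h' with h'' | h''
  · left; exact Units.ext h''
  · right; exact Units.ext (by rw [h'']; simp)

lemma diag_add {Γ K : Type*} [AddCommGroup Γ] [Field K] {ε : Γ → Γ → Kˣ}
    (hε : IsCommFactor ε) (i j : Γ) : ε (i + j) (i + j) = ε i i * ε j j := by
  obtain ⟨h1, h2, h3⟩ := hε
  rw [h2, h3, h3, mul_comm (ε i j) (ε j j), mul_mul_mul_comm, h1 j i, mul_one]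

theorem statement6 {Γ K : Type*} [AddCommGroup Γ] [Field K] (ε : Γ → Γ → Kˣ)
    (hε : IsCommFactor ε) :
    IsCommFactor (signFactor ε) ∧
    IsCommFactor (fun i j => signFactor ε i j * ε i j) ∧
    (∀ i : Γ, signFactor ε i i * ε i i = 1) := by
  classical
  have hpm := diag_pm hε
  have hadd := diag_add hε
  have hsign : IsCommFactor (signFactor ε) := by
    by_cases hneg : (-1 : Kˣ) = 1
    · refine ⟨fun i j => ?_, fun i j k => ?_, fun i j k => ?_⟩ <;>
        simp only [signFactor] <;> split_ifs <;> simp [hneg]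
    · refine ⟨fun i j => ?_, fun i j k => ?_, fun i j k => ?_⟩
      · simp only [signFactor]
        split_ifs with h h' h'
        · simp
        · exact absurd ⟨h.2, h.1⟩ h'
        · exact absurd ⟨h'.2, h'.1⟩ h
        · simp
      · simp only [signFactor, hadd]
        by_cases hi : ε i i = -1
        · rcases hpm j with hj | hj <;> rcases hpm k with hk | hk <;>
            simp [hi, hj, hk, hneg, Ne.symm hneg]
        · simp [hi]
      · simp only [signFactor, hadd]
        by_cases hk : ε k k = -1
        · rcases hpm i with hi | hi <;> rcases hpm j with hj | hj <;>
            simp [hi, hj, hk, hneg, Ne.symm hneg]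
        · simp [hk]
  have hproper : ∀ i : Γ, signFactor ε i i * ε i i = 1 := by
    intro i
    simp only [signFactor]
    by_cases hi : ε i i = -1
    · simp [hi]
    · rcases hpm i with h | h
      · rw [if_neg (fun hc => hi hc.1), h, one_mul]
      · exact absurd h hi
  exact ⟨hsign, mul_commFactor hsign hε, hproper⟩
end

section
/- Let ε₁ and ε₂ be two commutation factors on an abelian group Γ over a field K. Define Γ_{ε₁,ε₂} = {i ∈ Γ : ∀ j ∈ Γ, ε₁(i,j) = ε₂(i,j)} and R_{ε₁,ε₂} = {i ∈ Γ : ∀ j ∈ Γ, ε₁(i−j, j) = ε₂(i−j, j)}. Then: (a) if i ∈ R_{ε₁,ε₂} then −i ∈ R_{ε₁,ε₂}; (b) if i, j ∈ R_{ε₁,ε₂} then i + j ∈ Γ_{ε₁,ε₂}; (c) if ε₁(j,j) = ε₂(j,j) for all j ∈ Γ then R_{ε₁,ε₂} = Γ_{ε₁,ε₂}, and otherwise R_{ε₁,ε₂} ∩ Γ_{ε₁,ε₂} = ∅. -/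
/-!
The quotient `δ = ε₁ / ε₂` is again a commutation factor, and `ε₁ x y = ε₂ x y` means `δ x y = 1`,
so everything reduces to a single commutation factor `δ`. Since `δ` is multiplicative in its first
argument, `δ (i - j) j = 1` says `δ i j = δ j j`, and skew-symmetry gives `δ j j ^ 2 = 1`. Hence
for `i, i'` in `R` we get `δ (-i) j = (δ j j)⁻¹ = δ j j` and `δ (i + i') j = δ j j ^ 2 = 1`; if the
diagonal is trivial, `R` is the left kernel of `δ`, and an `i` in both forces `δ j j = δ i j = 1`.
-/

lemma div_apply_apply_eq_one_iff {α β G : Type*} [Group G] {f g : α → β → G} {a : α} {b : β} :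
    (f / g) a b = 1 ↔ f a b = g a b :=
  div_eq_one

namespace IsCommFactor

variable {Γ K : Type*} [AddCommGroup Γ] [Field K] {ε ε₁ ε₂ : Γ → Γ → Kˣ}

lemma map_add_left (h : IsCommFactor ε) (i j k : Γ) : ε (i + j) k = ε i k * ε j k :=
  h.2.2 i j k

lemma map_sub_left (h : IsCommFactor ε) (i j k : Γ) : ε (i - j) k = ε i k / ε j k := by
  rw [eq_div_iff_mul_eq', ← h.map_add_left, sub_add_cancel]

lemma map_neg_left (h : IsCommFactor ε) (i j : Γ) : ε (-i) j = (ε i j)⁻¹ := by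
  rw [neg_eq_zero_sub, h.map_sub_left, ← sub_self i, h.map_sub_left, div_self', one_div]

lemma diag_mul_self (h : IsCommFactor ε) (j : Γ) : ε j j * ε j j = 1 :=
  h.1 j j

lemma diag_inv (h : IsCommFactor ε) (j : Γ) : (ε j j)⁻¹ = ε j j :=
  inv_eq_of_mul_eq_one_right (h.diag_mul_self j)

lemma div (h₁ : IsCommFactor ε₁) (h₂ : IsCommFactor ε₂) : IsCommFactor (ε₁ / ε₂) := by
  refine ⟨fun i j => ?_, fun i j k => ?_, fun i j k => ?_⟩ <;>
    simp only [Pi.div_apply]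
  · rw [div_mul_div_comm, h₁.1, h₂.1, div_one]
  · rw [h₁.2.1, h₂.2.1, div_mul_div_comm]
  · rw [h₁.map_add_left, h₂.map_add_left, div_mul_div_comm]

lemma sub_left_eq_one_iff (h : IsCommFactor ε) (i j : Γ) : ε (i - j) j = 1 ↔ ε i j = ε j j := by
  rw [h.map_sub_left, div_eq_one]

lemma neg_sub_left_eq_one (h : IsCommFactor ε) {i : Γ} (hi : ∀ j, ε (i - j) j = 1) (j : Γ) :
    ε (-i - j) j = 1 := by
  rw [h.sub_left_eq_one_iff, h.map_neg_left, (h.sub_left_eq_one_iff i j).mp (hi j), h.diag_inv]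

lemma add_left_eq_one (h : IsCommFactor ε) {i i' : Γ} (hi : ∀ j, ε (i - j) j = 1)
    (hi' : ∀ j, ε (i' - j) j = 1) (j : Γ) : ε (i + i') j = 1 := by
  rw [h.map_add_left, (h.sub_left_eq_one_iff i j).mp (hi j), (h.sub_left_eq_one_iff i' j).mp (hi' j),
    h.diag_mul_self]

lemma sub_left_eq_one_iff_of_diag_eq_one (h : IsCommFactor ε) {j : Γ} (hj : ε j j = 1) (i : Γ) :
    ε (i - j) j = 1 ↔ ε i j = 1 := by
  rw [h.sub_left_eq_one_iff, hj]

lemma diag_eq_one_of_sub_left_eq_one (h : IsCommFactor ε) {i j : Γ} (hR : ε (i - j) j = 1)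
    (hG : ε i j = 1) : ε j j = 1 := by
  rwa [← (h.sub_left_eq_one_iff i j).mp hR]

end IsCommFactor

theorem statement8 {Γ K : Type*} [AddCommGroup Γ] [Field K]
    (ε₁ ε₂ : Γ → Γ → Kˣ) (h₁ : IsCommFactor ε₁) (h₂ : IsCommFactor ε₂) :
    (∀ i : Γ, (∀ j, ε₁ (i - j) j = ε₂ (i - j) j) → (∀ j, ε₁ (-i - j) j = ε₂ (-i - j) j)) ∧
    (∀ i j : Γ, (∀ k, ε₁ (i - k) k = ε₂ (i - k) k) → (∀ k, ε₁ (j - k) k = ε₂ (j - k) k) →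
      (∀ k, ε₁ (i + j) k = ε₂ (i + j) k)) ∧
    ((∀ j, ε₁ j j = ε₂ j j) →
      ∀ i : Γ, (∀ j, ε₁ (i - j) j = ε₂ (i - j) j) ↔ (∀ j, ε₁ i j = ε₂ i j)) ∧
    ((¬ ∀ j, ε₁ j j = ε₂ j j) →
      ∀ i : Γ, ¬ ((∀ j, ε₁ (i - j) j = ε₂ (i - j) j) ∧ (∀ j, ε₁ i j = ε₂ i j))) := by
  have h := h₁.div h₂
  simp only [← div_apply_apply_eq_one_iff (f := ε₁) (g := ε₂)]
  exact ⟨fun _ => h.neg_sub_left_eq_one, fun _ _ => h.add_left_eq_one,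
    fun hd i => forall_congr' fun j => h.sub_left_eq_one_iff_of_diag_eq_one (hd j) i,
    fun hd _ ⟨hR, hG⟩ => hd fun j => h.diag_eq_one_of_sub_left_eq_one (hR j) (hG j)⟩
end

section
/- Let Γ be an abelian group, K a field, ε a commutation factor on Γ over K, D a natural number, and φ : Fin D → Γ. If a matrix A ∈ M_D(K) has vanishing ε-graded commutator with every elementary matrix for the elementary grading determined by φ, i.e. for all indices i, j, k, l: A_{ik}·δ_{jl} = ε(φ(l) − φ(j), φ(k) − φ(l))·A_{lj}·δ_{ik}, then A is a scalar multiple of the identity matrix (the ε-center of the elementary ε-graded matrix algebra is K·1). -/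
theorem statement9 {Γ K : Type*} [AddCommGroup Γ] [Field K]
    (ε : Γ → Γ → Kˣ) (hε : IsCommFactor ε)
    (D : ℕ) (φ : Fin D → Γ) (A : Matrix (Fin D) (Fin D) K)
    (hA : ∀ i j k l : Fin D,
      A i k * (if j = l then (1 : K) else 0) =
      (ε (φ l - φ j) (φ k - φ l) : K) * A l j * (if i = k then (1 : K) else 0)) :
    ∃ c : K, A = c • (1 : Matrix (Fin D) (Fin D) K) := by
  obtain ⟨h1, h2, h3⟩ := hε
  -- ε 0 x = 1
  have hε0 : ∀ x : Γ, (ε 0 x : K) = 1 := by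
    intro x
    have := h3 0 0 x
    rw [add_zero] at this
    have : ε 0 x = 1 := by
      have h := mul_right_cancel (a := ε 0 x) (b := ε 0 x) (c := 1) ?_
      · exact h
      · rw [one_mul]; exact this.symm
    rw [this]; rfl
  -- off-diagonal entries vanish
  have hoff : ∀ i k : Fin D, i ≠ k → A i k = 0 := by
    intro i k hik
    have := hA i i k i
    simp [hik] at this
    exact this
  -- diagonal entries are equal
  have hdiag : ∀ i l : Fin D, A i i = A l l := by
    intro i l
    have := hA i l i l
    simp [hε0] at this
    exact this
  by_cases hD : 0 < D
  · refine ⟨A ⟨0, hD⟩ ⟨0, hD⟩, ?_⟩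
    ext i k
    by_cases hik : i = k
    · subst hik
      simp [Matrix.one_apply, hdiag i ⟨0, hD⟩]
    · simp [Matrix.one_apply, hik, hoff i k hik]
  · refine ⟨0, ?_⟩
    ext i k
    exact absurd i.2 (by omega)
end

section
/- Let Γ be an abelian group, K a field, ε a commutation factor on Γ over K, D a natural number, and φ : Fin D → Γ. A linear form T : M_D(K) → K satisfies the ε-trace property T(E_{ij}·E_{kl}) = ε(φ(i) − φ(j), φ(k) − φ(l))·T(E_{kl}·E_{ij}) for all indices i, j, k, l if and only if there exists λ ∈ K such that T = λ·tr_ε, where tr_ε(A) = Σ_i ε(φ(i), φ(i))·A_{ii}. In particular the space of ε-traces on the elementary ε-graded matrix algebra is one-dimensional, spanned by tr_ε. -/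
namespace IsCommFactor

variable {Γ K : Type*} [AddCommGroup Γ] [Field K] {ε : Γ → Γ → Kˣ}

lemma apply_swap (hε : IsCommFactor ε) (a b : Γ) : ε b a = (ε a b)⁻¹ :=
  eq_inv_of_mul_eq_one_right (hε.1 a b)

lemma apply_self_inv (hε : IsCommFactor ε) (a : Γ) : (ε a a)⁻¹ = ε a a :=
  (hε.apply_swap a a).symm

lemma val_apply_self_mul_self (hε : IsCommFactor ε) (a : Γ) : (ε a a : K) * ε a a = 1 := by
  rw [← Units.val_mul, hε.1, Units.val_one]

lemma apply_zero_right (hε : IsCommFactor ε) (a : Γ) : ε a 0 = 1 := by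
  simpa using hε.2.1 a 0 0

lemma apply_neg_right (hε : IsCommFactor ε) (a b : Γ) : ε a (-b) = (ε a b)⁻¹ :=
  eq_inv_of_mul_eq_one_right <| by rw [← hε.2.1, add_neg_cancel, hε.apply_zero_right]

lemma apply_neg_left (hε : IsCommFactor ε) (a b : Γ) : ε (-a) b = (ε a b)⁻¹ := by
  rw [hε.apply_swap, hε.apply_neg_right, inv_inv, hε.apply_swap]

lemma apply_sub_sub_swap (hε : IsCommFactor ε) (a b : Γ) :
    ε (a - b) (b - a) = ε a a * ε b b := by
  simp only [sub_eq_add_neg, hε.2.1, hε.2.2, hε.apply_neg_left, hε.apply_neg_right, inv_inv,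
    hε.apply_swap b a, hε.apply_self_inv]
  simp [mul_comm, mul_left_comm]

end IsCommFactor

open Matrix

section EpsTrace

variable {Γ K n : Type*} [Field K] [Fintype n] [DecidableEq n]

def epsTrace (ε : Γ → Γ → Kˣ) (φ : n → Γ) : Matrix n n K →ₗ[K] K :=
  traceLinearMap n K K ∘ₗ LinearMap.mulLeft K (diagonal fun i => (ε (φ i) (φ i) : K))

lemma epsTrace_apply (ε : Γ → Γ → Kˣ) (φ : n → Γ) (A : Matrix n n K) :
    epsTrace ε φ A = ∑ i, (ε (φ i) (φ i) : K) * A i i := by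
  simp [epsTrace, trace, diagonal_mul]

lemma epsTrace_single (ε : Γ → Γ → Kˣ) (φ : n → Γ) (i j : n) :
    epsTrace ε φ (single i j 1) = if i = j then (ε (φ i) (φ i) : K) else 0 := by
  split_ifs with hij
  · subst hij
    simp [epsTrace_apply, single_apply]
  · refine (epsTrace_apply ε φ _).trans (Finset.sum_eq_zero fun m _ => ?_)
    rw [single_apply, if_neg (fun him => hij (him.1.trans him.2.symm)), mul_zero]

variable [AddCommGroup Γ]

def IsEpsTrace (ε : Γ → Γ → Kˣ) (φ : n → Γ) (T : Matrix n n K →ₗ[K] K) : Prop :=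
  ∀ i j k l, T (single i j 1 * single k l 1) =
    (ε (φ i - φ j) (φ k - φ l) : K) * T (single k l 1 * single i j 1)

variable {ε : Γ → Γ → Kˣ} {φ : n → Γ} {T : Matrix n n K →ₗ[K] K}

lemma IsEpsTrace.smul (h : IsEpsTrace ε φ T) (c : K) : IsEpsTrace ε φ (c • T) := by
  intro i j k l
  simp only [LinearMap.smul_apply, smul_eq_mul, h i j k l]
  ring

lemma isEpsTrace_epsTrace (hε : IsCommFactor ε) : IsEpsTrace ε φ (epsTrace ε φ) := by
  intro i j k l
  by_cases hjk : j = k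
  · subst k
    by_cases hli : l = i
    · subst l
      simp only [single_mul_single_same, mul_one, epsTrace_single, if_true, hε.apply_sub_sub_swap,
        Units.val_mul]
      linear_combination -(ε (φ i) (φ i) : K) * hε.val_apply_self_mul_self (φ j)
    · simp [epsTrace_single, Ne.symm hli, hli]
  · by_cases hli : l = i
    · subst l
      simp [epsTrace_single, hjk, Ne.symm hjk]
    · simp [hjk, hli]

lemma IsEpsTrace.apply_single_of_ne (h : IsEpsTrace ε φ T) {i j : n} (hij : i ≠ j) :
    T (single i j 1) = 0 := by
  simpa [Ne.symm hij] using h i j j j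

lemma IsEpsTrace.apply_single_self (hε : IsCommFactor ε) (h : IsEpsTrace ε φ T) (i j : n) :
    (ε (φ i) (φ i) : K) * T (single i i 1) = ε (φ j) (φ j) * T (single j j 1) := by
  have hij := h i j j i
  simp only [single_mul_single_same, mul_one, hε.apply_sub_sub_swap, Units.val_mul] at hij
  rw [hij]
  linear_combination (ε (φ j) (φ j) * T (single j j 1)) * hε.val_apply_self_mul_self (φ i)

lemma IsEpsTrace.exists_eq_smul_epsTrace (hε : IsCommFactor ε) (h : IsEpsTrace ε φ T) :
    ∃ c : K, T = c • epsTrace ε φ := by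
  cases isEmpty_or_nonempty n with
  | inl _ => exact ⟨0, Subsingleton.elim _ _⟩
  | inr hn =>
    obtain ⟨p⟩ := hn
    refine ⟨ε (φ p) (φ p) * T (single p p 1), ext_linearMap K fun i j => LinearMap.ext_ring ?_⟩
    simp only [LinearMap.comp_apply, singleLinearMap_apply, LinearMap.smul_apply, epsTrace_single,
      smul_eq_mul]
    split_ifs with hij
    · subst hij
      rw [← h.apply_single_self hε i p]
      linear_combination (-T (single i i 1)) * hε.val_apply_self_mul_self (φ i)
    · rw [h.apply_single_of_ne hij, mul_zero]

theorem isEpsTrace_iff_exists_eq_smul_epsTrace (hε : IsCommFactor ε) :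
    IsEpsTrace ε φ T ↔ ∃ c : K, T = c • epsTrace ε φ :=
  ⟨fun h => h.exists_eq_smul_epsTrace hε, fun ⟨c, hc⟩ => hc ▸ (isEpsTrace_epsTrace hε).smul c⟩

end EpsTrace

theorem statement10 {Γ K : Type*} [AddCommGroup Γ] [Field K]
    (ε : Γ → Γ → Kˣ) (hε : IsCommFactor ε)
    (D : ℕ) (φ : Fin D → Γ)
    (T : Matrix (Fin D) (Fin D) K →ₗ[K] K) :
    (∀ i j k l : Fin D,
      T (Matrix.single i j 1 * Matrix.single k l 1) =
      (ε (φ i - φ j) (φ k - φ l) : K) *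
        T (Matrix.single k l 1 * Matrix.single i j 1)) ↔
    (∃ lam : K, ∀ A : Matrix (Fin D) (Fin D) K,
      T A = lam * ∑ i, (ε (φ i) (φ i) : K) * A i i) := by
  rw [← IsEpsTrace, isEpsTrace_iff_exists_eq_smul_epsTrace hε]
  simp only [LinearMap.ext_iff, LinearMap.smul_apply, smul_eq_mul, epsTrace_apply]
end

section
/- Let Γ be an abelian group, K a field, ε a commutation factor on Γ over K, D a natural number, φ : Fin D → Γ, and d ∈ Γ. Let X : M_D(K) → M_D(K) be a K-linear map such that: (homogeneity) for all i, j, the matrix X(E_{ij}) is homogeneous of degree φ(i) − φ(j) + d for the elementary grading determined by φ; and (ε-Leibniz rule on basis matrices) for all i, j, k, l: X(E_{ij}·E_{kl}) = X(E_{ij})·E_{kl} + ε(d, φ(i) − φ(j))·E_{ij}·X(E_{kl}). Then X is an inner ε-derivation: there exists a matrix M ∈ M_D(K), homogeneous of degree d, such that X(E_{ij}) = M·E_{ij} − ε(d, φ(i) − φ(j))·E_{ij}·M for all i, j. -/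
namespace Matrix

variable {n R : Type*} [Fintype n] [DecidableEq n] [Ring R]

lemma sum_single_mul_single_one (z : n) :
    ∑ k, single k z (1 : R) * single z k 1 = 1 := by
  simp only [single_mul_single_same, mul_one, sum_single_one]

def innerDerivationMatrix (f : Matrix n n R →+ Matrix n n R) (z : n) : Matrix n n R :=
  ∑ k, f (single k z 1) * single z k 1

variable (f : Matrix n n R →+ Matrix n n R) (z : n)

lemma innerDerivationMatrix_apply (k l : n) :
    innerDerivationMatrix f z k l = f (single l z 1) k z := by
  rw [innerDerivationMatrix, sum_apply, Finset.sum_eq_single l]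
  · simp
  · intro m _ hm
    simp [Ne.symm hm]
  · simp

lemma innerDerivationMatrix_mul_single (i j : n) :
    innerDerivationMatrix f z * single i j 1 = f (single i z 1) * single z j 1 := by
  rw [innerDerivationMatrix, Finset.sum_mul, Finset.sum_eq_single i]
  · rw [mul_assoc, single_mul_single_same, one_mul]
  · intro m _ hm
    rw [mul_assoc, single_mul_single_of_ne (h := hm), mul_zero]
  · simp

lemma smul_single_mul_innerDerivationMatrix {i j : n} {r : R}
    (hleib : ∀ k, f (single i j 1 * single k z 1) =
      f (single i j 1) * single k z 1 + r • (single i j 1 * f (single k z 1))) :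
    r • (single i j 1 * innerDerivationMatrix f z) =
      f (single i z 1) * single z j 1 - f (single i j 1) := by
  have hterm : ∀ k, r • (single i j 1 * (f (single k z 1) * single z k 1)) =
      f (single i j 1 * single k z 1) * single z k 1 -
        f (single i j 1) * (single k z 1 * single z k 1) := by
    intro k
    rw [hleib, ← mul_assoc, ← smul_mul_assoc, ← mul_assoc, ← sub_mul, add_sub_cancel_left]
  have hcollapse : ∑ k, f (single i j 1 * single k z 1) * single z k 1 =
      f (single i z 1) * single z j 1 := by
    rw [Finset.sum_eq_single j]
    · rw [single_mul_single_same, one_mul]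
    · intro m _ hm
      rw [single_mul_single_of_ne (h := Ne.symm hm), map_zero, zero_mul]
    · simp
  calc r • (single i j 1 * innerDerivationMatrix f z)
      = ∑ k, r • (single i j 1 * (f (single k z 1) * single z k 1)) := by
        rw [innerDerivationMatrix, Finset.mul_sum, Finset.smul_sum]
    _ = ∑ k, f (single i j 1 * single k z 1) * single z k 1 -
          f (single i j 1) * ∑ k, single k z 1 * single z k 1 := by
        rw [Finset.mul_sum, ← Finset.sum_sub_distrib]
        exact Finset.sum_congr rfl fun k _ => hterm k
    _ = f (single i z 1) * single z j 1 - f (single i j 1) := by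
        rw [hcollapse, sum_single_mul_single_one, mul_one]

lemma eq_innerDerivationMatrix_mul_sub {i j : n} {r : R}
    (hleib : ∀ k, f (single i j 1 * single k z 1) =
      f (single i j 1) * single k z 1 + r • (single i j 1 * f (single k z 1))) :
    f (single i j 1) = innerDerivationMatrix f z * single i j 1 -
      r • (single i j 1 * innerDerivationMatrix f z) := by
  rw [innerDerivationMatrix_mul_single, smul_single_mul_innerDerivationMatrix f z hleib,
    sub_sub_cancel]

end Matrix

theorem statement11_general {Γ K : Type*} [AddCommGroup Γ] [Field K]
    (ε : Γ → Γ → Kˣ)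
    (D : ℕ) (φ : Fin D → Γ) (d : Γ)
    (X : Matrix (Fin D) (Fin D) K →ₗ[K] Matrix (Fin D) (Fin D) K)
    (hhom : ∀ i j k l : Fin D, φ k - φ l ≠ φ i - φ j + d →
      X (Matrix.single i j 1) k l = 0)
    (hleib : ∀ i j k l : Fin D,
      X (Matrix.single i j 1 * Matrix.single k l 1) =
      X (Matrix.single i j 1) * Matrix.single k l 1 +
      (ε d (φ i - φ j) : K) •
        (Matrix.single i j 1 * X (Matrix.single k l 1))) :
    ∃ M : Matrix (Fin D) (Fin D) K,
      (∀ k l : Fin D, φ k - φ l ≠ d → M k l = 0) ∧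
      (∀ i j : Fin D, X (Matrix.single i j 1) =
        M * Matrix.single i j 1 -
        (ε d (φ i - φ j) : K) • (Matrix.single i j 1 * M)) := by
  rcases isEmpty_or_nonempty (Fin D) with _ | ⟨⟨z⟩⟩
  · exact ⟨0, fun k => isEmptyElim k, fun i => isEmptyElim i⟩
  · refine ⟨Matrix.innerDerivationMatrix X.toAddMonoidHom z, fun k l hkl => ?_, fun i j =>
      Matrix.eq_innerDerivationMatrix_mul_sub X.toAddMonoidHom z fun k => hleib i j k z⟩
    rw [Matrix.innerDerivationMatrix_apply]
    refine hhom l z k z fun h => hkl ?_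
    rw [← sub_sub_sub_cancel_right (φ k) (φ l) (φ z), h, add_sub_cancel_left]

theorem statement11 {Γ K : Type*} [AddCommGroup Γ] [Field K]
    (ε : Γ → Γ → Kˣ) (hε : IsCommFactor ε)
    (D : ℕ) (φ : Fin D → Γ) (d : Γ)
    (X : Matrix (Fin D) (Fin D) K →ₗ[K] Matrix (Fin D) (Fin D) K)
    (hhom : ∀ i j k l : Fin D, φ k - φ l ≠ φ i - φ j + d →
      X (Matrix.single i j 1) k l = 0)
    (hleib : ∀ i j k l : Fin D,
      X (Matrix.single i j 1 * Matrix.single k l 1) =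
      X (Matrix.single i j 1) * Matrix.single k l 1 +
      (ε d (φ i - φ j) : K) •
        (Matrix.single i j 1 * X (Matrix.single k l 1))) :
    ∃ M : Matrix (Fin D) (Fin D) K,
      (∀ k l : Fin D, φ k - φ l ≠ d → M k l = 0) ∧
      (∀ i j : Fin D, X (Matrix.single i j 1) =
        M * Matrix.single i j 1 -
        (ε d (φ i - φ j) : K) • (Matrix.single i j 1 * M)) :=
  statement11_general ε D φ d X hhom hleib
end

section
/- Let Γ be an abelian group, K a field, ε a commutation factor on Γ over K, D a natural number, and φ : Fin D → Γ, and assume tr_ε(1) = Σ_i ε(φ(i), φ(i)) ≠ 0 in K. Let d ∈ Γ and let X : M_D(K) → M_D(K) be a K-linear map such that for all i, j the matrix X(E_{ij}) is homogeneous of degree φ(i) − φ(j) + d, and for all i, j, k, l: X(E_{ij}·E_{kl}) = X(E_{ij})·E_{kl} + ε(d, φ(i) − φ(j))·E_{ij}·X(E_{kl}). Then there exists a UNIQUE matrix M ∈ M_D(K) which is homogeneous of degree d and ε-traceless (tr_ε(M) = 0) such that X(E_{ij}) = M·E_{ij} − ε(d, φ(i) − φ(j))·E_{ij}·M for all i,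 j; that is, the adjoint representation is an isomorphism from the ε-traceless matrices sl_ε(D,K) onto the ε-derivations of the elementary ε-graded matrix algebra. -/
namespace IsCommFactor

variable {Γ K : Type*} [AddCommGroup Γ] [Field K] {ε : Γ → Γ → Kˣ}

lemma mul_apply_sub (hε : IsCommFactor ε) (d x y z : Γ) :
    ε d (x - y) * ε d (y - z) = ε d (x - z) := by
  rw [← hε.2.1, sub_add_sub_cancel]

lemma zero_left (hε : IsCommFactor ε) (x : Γ) : ε 0 x = 1 := by
  have h := hε.2.2 0 0 x
  rwa [add_zero, left_eq_mul] at h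

end IsCommFactor

namespace Matrix

section TwistedDerivation

variable {n R : Type*} [Fintype n] [DecidableEq n] [CommRing R]

lemma mul_single_one_apply (M : Matrix n n R) (i j p q : n) :
    (M * single i j (1 : R)) p q = if q = j then M p i else 0 := by
  by_cases hq : q = j <;> simp [hq]

lemma single_one_mul_apply (M : Matrix n n R) (i j p q : n) :
    (single i j (1 : R) * M) p q = if p = i then M j q else 0 := by
  by_cases hp : p = i <;> simp [hp]

lemma single_one_mul_single_one (i j k l : n) :
    (single i j 1 * single k l 1 : Matrix n n R) = if j = k then single i l 1 else 0 := by
  split_ifs with h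
  · rw [h, single_mul_single_same, one_mul]
  · exact single_mul_single_of_ne _ _ _ _ h _

lemma mul_single_sub_smul_single_mul_apply (M : Matrix n n R) (a : R) (i j p q : n) :
    (M * single i j 1 - a • (single i j 1 * M) : Matrix n n R) p q =
      (if q = j then M p i else 0) - a * (if p = i then M j q else 0) := by
  rw [Matrix.sub_apply, Matrix.smul_apply, smul_eq_mul, mul_single_one_apply, single_one_mul_apply]

lemma twisted_leibniz_apply {a : n → n → R} {X : Matrix n n R →ₗ[R] Matrix n n R}
    (hX : ∀ i j k l, X (single i j 1 * single k l 1) =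
      X (single i j 1) * single k l 1 + a i j • (single i j 1 * X (single k l 1)))
    (i j k l p q : n) :
    (if j = k then X (single i l 1) p q else 0) =
      (if q = l then X (single i j 1) p k else 0) +
        a i j * (if p = i then X (single k l 1) j q else 0) := by
  have h := congr_fun₂ (hX i j k l) p q
  rw [single_one_mul_single_one, Matrix.add_apply, Matrix.smul_apply, smul_eq_mul,
    mul_single_one_apply, single_one_mul_apply] at h
  rw [← h]
  split_ifs <;> simp

theorem apply_single_eq_of_twisted_leibniz {c : n → n → Rˣ}
    (hc : ∀ i j k, c i j * c j k = c i k) {X : Matrix n n R →ₗ[R] Matrix n n R}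
    (hX : ∀ i j k l, X (single i j 1 * single k l 1) =
      X (single i j 1) * single k l 1 + (c i j : R) • (single i j 1 * X (single k l 1)))
    (i₀ i j : n) :
    X (single i j 1) = of (fun p q => X (single q i₀ 1) p i₀) * single i j 1 -
      (c i j : R) • (single i j 1 * of (fun p q => X (single q i₀ 1) p i₀)) := by
  have hX' := twisted_leibniz_apply hX
  have hc₀ : c i₀ i₀ = 1 := mul_eq_left.mp (hc i₀ i₀ i₀)
  have hdiag : X (single i₀ i₀ 1) i₀ i₀ = 0 := by
    simpa [hc₀] using hX' i₀ i₀ i₀ i₀ i₀ i₀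
  have hskew : ∀ j q, X (single i₀ j 1) i₀ q = -(c i₀ j * X (single q i₀ 1) j i₀) := by
    intro j q
    have h := hX' i₀ j q i₀ i₀ i₀
    simp only [if_true, hdiag, ite_self] at h
    linear_combination -h
  ext p q
  rw [mul_single_sub_smul_single_mul_apply]
  have h := hX' i i₀ i₀ j p q
  simp only [if_true, hskew] at h
  rw [h, ← hc i i₀ j, Units.val_mul, of_apply, of_apply]
  split_ifs <;> ring

variable {a : n → n → R} {N : Matrix n n R}

lemma apply_eq_zero_of_mul_single_eq (hN : ∀ i j, N * single i j 1 = a i j • (single i j 1 * N))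
    {p q : n} (hpq : p ≠ q) : N p q = 0 := by
  simpa [mul_single_one_apply, single_one_mul_apply, hpq] using congr_fun₂ (hN q q) p q

lemma diag_eq_of_mul_single_eq (hN : ∀ i j, N * single i j 1 = a i j • (single i j 1 * N))
    (i j : n) : N i i = a i j * N j j := by
  simpa [mul_single_one_apply, single_one_mul_apply] using congr_fun₂ (hN i j) i j

end TwistedDerivation

section ElementaryGrading

variable {Γ K n : Type*} [Field K]

def IsHomogeneous [AddCommGroup Γ] (φ : n → Γ) (d : Γ) (M : Matrix n n K) : Prop :=
  ∀ k l, φ k - φ l ≠ d → M k l = 0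

def epsTrace [Fintype n] (ε : Γ → Γ → Kˣ) (φ : n → Γ) (M : Matrix n n K) : K :=
  ∑ i, (ε (φ i) (φ i) : K) * M i i

variable {ε : Γ → Γ → Kˣ} {φ : n → Γ} {d : Γ}

lemma IsHomogeneous.sub [AddCommGroup Γ] {M M' : Matrix n n K} (hM : IsHomogeneous φ d M)
    (hM' : IsHomogeneous φ d M') : IsHomogeneous φ d (M - M') := fun k l hkl => by
  rw [Matrix.sub_apply, hM k l hkl, hM' k l hkl, sub_zero]

lemma epsTrace_sub [Fintype n] (M M' : Matrix n n K) :
    epsTrace ε φ (M - M') = epsTrace ε φ M - epsTrace ε φ M' := by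
  simp only [epsTrace, Matrix.sub_apply, mul_sub, Finset.sum_sub_distrib]

lemma epsTrace_smul_one [Fintype n] [DecidableEq n] (a : K) :
    epsTrace ε φ (a • 1 : Matrix n n K) = a * ∑ i, (ε (φ i) (φ i) : K) := by
  simp only [epsTrace, Matrix.smul_apply, Matrix.one_apply_eq, smul_eq_mul, mul_one,
    Finset.mul_sum, mul_comm]

lemma epsTrace_eq_zero_of_isHomogeneous [AddCommGroup Γ] [Fintype n] {M : Matrix n n K}
    (hM : IsHomogeneous φ d M) (hd : d ≠ 0) : epsTrace ε φ M = 0 :=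
  Finset.sum_eq_zero fun i _ => by rw [hM i i (by rwa [sub_self, ne_comm]), mul_zero]

variable [AddCommGroup Γ] [Fintype n] [DecidableEq n]

theorem eq_zero_of_mul_single_eq (hε : IsCommFactor ε) (htr : ∑ i, (ε (φ i) (φ i) : K) ≠ 0)
    {N : Matrix n n K} (hhom : IsHomogeneous φ d N) (htrN : epsTrace ε φ N = 0)
    (hN : ∀ i j, N * single i j 1 = (ε d (φ i - φ j) : K) • (single i j 1 * N)) : N = 0 := by
  ext p q
  by_cases hpq : p = q
  · subst hpq
    by_cases hd : d = 0
    · subst hd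
      have hconst : ∀ i, N i i = N p p := fun i => by
        simpa [hε.zero_left] using diag_eq_of_mul_single_eq hN i p
      have : (∑ i, (ε (φ i) (φ i) : K)) * N p p = 0 := by
        rw [← htrN, epsTrace, Finset.sum_mul]
        simp only [hconst]
      exact (mul_eq_zero.mp this).resolve_left htr
    · exact hhom p p (by rwa [sub_self, ne_comm])
  · exact apply_eq_zero_of_mul_single_eq hN hpq

theorem exists_epsTrace_eq_zero_of_isHomogeneous (hε : IsCommFactor ε)
    (htr : ∑ i, (ε (φ i) (φ i) : K) ≠ 0) {M₀ : Matrix n n K} (hM₀ : IsHomogeneous φ d M₀) :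
    ∃ M, IsHomogeneous φ d M ∧ epsTrace ε φ M = 0 ∧ ∀ i j,
      M * single i j 1 - (ε d (φ i - φ j) : K) • (single i j 1 * M) =
        M₀ * single i j 1 - (ε d (φ i - φ j) : K) • (single i j 1 * M₀) := by
  by_cases hd : d = 0
  · subst hd
    refine ⟨M₀ - (epsTrace ε φ M₀ / ∑ i, (ε (φ i) (φ i) : K)) • 1, fun k l hkl => ?_, ?_, ?_⟩
    · have hkl' : k ≠ l := by rintro rfl; exact hkl (sub_self _)
      simp [hM₀ k l hkl, hkl']
    · rw [epsTrace_sub, epsTrace_smul_one, div_mul_cancel₀ _ htr, sub_self]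
    · intro i j
      simp [hε.zero_left, sub_mul, mul_sub]
  · exact ⟨M₀, hM₀, epsTrace_eq_zero_of_isHomogeneous hM₀ hd, fun _ _ => rfl⟩

end ElementaryGrading

end Matrix

open Matrix

theorem statement12 {Γ K : Type*} [AddCommGroup Γ] [Field K]
    (ε : Γ → Γ → Kˣ) (hε : IsCommFactor ε)
    (D : ℕ) (φ : Fin D → Γ)
    (htr : (∑ i, (ε (φ i) (φ i) : K)) ≠ 0)
    (d : Γ)
    (X : Matrix (Fin D) (Fin D) K →ₗ[K] Matrix (Fin D) (Fin D) K)
    (hhom : ∀ i j k l : Fin D, φ k - φ l ≠ φ i - φ j + d →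
      X (Matrix.single i j 1) k l = 0)
    (hleib : ∀ i j k l : Fin D,
      X (Matrix.single i j 1 * Matrix.single k l 1) =
      X (Matrix.single i j 1) * Matrix.single k l 1 +
      (ε d (φ i - φ j) : K) •
        (Matrix.single i j 1 * X (Matrix.single k l 1))) :
    ∃! M : Matrix (Fin D) (Fin D) K,
      (∀ k l : Fin D, φ k - φ l ≠ d → M k l = 0) ∧
      (∑ i, (ε (φ i) (φ i) : K) * M i i) = 0 ∧
      (∀ i j : Fin D, X (Matrix.single i j 1) =
        M * Matrix.single i j 1 -
        (ε d (φ i - φ j) : K) • (Matrix.single i j 1 * M)) := by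
  have i₀ : Fin D := ⟨0, Nat.pos_of_ne_zero (by rintro rfl; simp at htr)⟩
  have hX := apply_single_eq_of_twisted_leibniz
    (fun i j k => hε.mul_apply_sub d (φ i) (φ j) (φ k)) hleib i₀
  have hM₀ : IsHomogeneous φ d (of fun p q => X (single q i₀ 1) p i₀) := fun k l hkl =>
    hhom l i₀ k i₀ fun h => hkl (by rw [← sub_sub_sub_cancel_right _ _ (φ i₀), h]; abel)
  obtain ⟨M, hMhom, hMtr, hM⟩ := exists_epsTrace_eq_zero_of_isHomogeneous hε htr hM₀
  refine ⟨M, ⟨hMhom, hMtr, fun i j => (hX i j).trans (hM i j).symm⟩, ?_⟩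
  rintro M' ⟨hM'hom, hM'tr, hM'⟩
  rw [← sub_eq_zero]
  refine eq_zero_of_mul_single_eq hε htr (IsHomogeneous.sub hM'hom hMhom) ?_ fun i j => ?_
  · rw [epsTrace_sub, hMtr, sub_zero]
    exact hM'tr
  · rw [sub_mul, mul_sub, smul_sub, sub_eq_sub_iff_sub_eq_sub, ← hM', hX i j, hM i j]
end

section
/- Let Γ be an abelian group, K a field, ε a commutation factor on Γ over K, σ a factor set on Γ over K, d ∈ Γ, and x : Γ → K. If for all α, β ∈ Γ: σ(d, α+β)·x(α+β)·σ(α,β) = σ(d,α)·x(α)·σ(α+d, β) + ε(d,α)·σ(d,β)·x(β)·σ(α, β+d), then for all α, β ∈ Γ: x(α+β) = x(α) + ε(d,α)·ε_σ(d,α)⁻¹·x(β), where ε_σ(i,j) = σ(i,j)·σ(j,i)⁻¹. -/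
theorem statement13 {Γ K : Type*} [AddCommGroup Γ] [Field K]
    (ε : Γ → Γ → Kˣ) (hε : IsCommFactor ε)
    (σ : Γ → Γ → Kˣ)
    (hσ : ∀ i j k, σ i (j + k) * σ j k = σ i j * σ (i + j) k)
    (d : Γ) (x : Γ → K)
    (hx : ∀ α β : Γ,
      (σ d (α + β) : K) * x (α + β) * (σ α β : K) =
      (σ d α : K) * x α * (σ (α + d) β : K) +
      (ε d α : K) * (σ d β : K) * x β * (σ α (β + d) : K)) :
    ∀ α β : Γ,
      x (α + β) = x α + (ε d α : K) * (((σ d α * (σ α d)⁻¹)⁻¹ : Kˣ) : K) * x β := by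
  intro α β
  have c1 : (σ d (α + β) : K) * σ α β = σ d α * σ (α + d) β := by
    have := hσ d α β
    rw [add_comm d α] at this
    exact_mod_cast congrArg Units.val this
  have c3 : (σ α (β + d) : K) * σ d β = σ α d * σ (α + d) β := by
    have := hσ α d β
    rw [add_comm d β] at this
    exact_mod_cast congrArg Units.val this
  have hxa := hx α β
  have n1 : (σ d (α + β) : K) ≠ 0 := Units.ne_zero _
  have n2 : (σ α β : K) ≠ 0 := Units.ne_zero _
  have n3 : (σ d α : K) ≠ 0 := Units.ne_zero _
  push_cast
  field_simp
  have n4 : (σ (α + d) β : K) ≠ 0 := Units.ne_zero _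
  apply mul_right_cancel₀ n4
  linear_combination hxa - x (α + β) * c1 + (ε d α : K) * x β * c3
end

section
/- Let Γ be an abelian group, K a field, ε a commutation factor on Γ over K, σ a factor set on Γ over K, and d ∈ Γ; set c(α) = ε(d,α)·ε_σ(d,α)⁻¹ ∈ Kˣ where ε_σ(i,j) = σ(i,j)·σ(j,i)⁻¹. Suppose x : Γ → K satisfies x(α+β) = x(α) + c(α)·x(β) for all α, β ∈ Γ. If there exists α₀ ∈ Γ with c(α₀) ≠ 1 (i.e. d ∉ Γ_{ε,ε_σ}), then there exists λ ∈ K such that x(β) = λ·(1 − c(β)) for all β ∈ Γ (the corresponding homogeneous ε-derivation is inner); if instead c(α) = 1 for all α ∈ Γ, then x is additive: x(α+β) = x(α) + x(β) for all α, β. -/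
theorem statement14 {Γ K : Type*} [AddCommGroup Γ] [Field K]
    (ε : Γ → Γ → Kˣ) (hε : IsCommFactor ε)
    (σ : Γ → Γ → Kˣ)
    (hσ : ∀ i j k, σ i (j + k) * σ j k = σ i j * σ (i + j) k)
    (d : Γ) (c : Γ → Kˣ)
    (hc : ∀ α, c α = ε d α * (σ d α * (σ α d)⁻¹)⁻¹)
    (x : Γ → K)
    (hx : ∀ α β : Γ, x (α + β) = x α + (c α : K) * x β) :
    ((∃ α₀ : Γ, c α₀ ≠ 1) → ∃ lam : K, ∀ β : Γ, x β = lam * (1 - (c β : K))) ∧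
    ((∀ α : Γ, c α = 1) → ∀ α β : Γ, x (α + β) = x α + x β) := by
  constructor
  · rintro ⟨α₀, hα₀⟩
    have hne : (1 : K) - (c α₀ : K) ≠ 0 := by
      intro h
      apply hα₀
      ext
      simpa using (sub_eq_zero.mp h).symm
    refine ⟨x α₀ / (1 - (c α₀ : K)), fun β => ?_⟩
    have hsym : x α₀ + (c α₀ : K) * x β = x β + (c β : K) * x α₀ := by
      rw [← hx, ← hx, add_comm α₀ β]
    field_simp
    linear_combination -hsym
  · intro h α β
    rw [hx, h α]
    simp
end

section
/- Let Ω, κ ∈ ℝ with 0 < Ω² < 1/3, and set r = (1 + Ω² + √(8Ω²(1−Ω²)))/(1 − 3Ω²). Then r > 1, and a sequence u : ℕ → ℝ satisfies u(0) = 0 together with the recurrence (3Ω² − 1)·(u(m) + u(m+2)) + 2·(1+Ω²)·u(m+1) + 2κ = 0 for every m ∈ ℕ if and only if there exists α ∈ ℝ such that u(m) = α·(r^m − r^(−m)) − (κ/(4Ω²))·(1 − r^(−m)) for all m ∈ ℕ. Moreover, if in addition u(m) ≥ 0 for all m, then α ≥ 0. -/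
/-!
The characteristic equation `(3Ω² - 1)(x² + 1) + 2(1 + Ω²)x = 0` of the recurrence is
palindromic, so its roots are `r` and `r⁻¹`, and `-κ/(4Ω²)` is a constant solution. Every
solution is therefore `A rᵐ + B r⁻ᵐ - κ/(4Ω²)`, a second-order recurrence being determined by
its first two terms; `u 0 = 0` forces `A + B = κ/(4Ω²)`, which is the stated form with `α = A`.
For `α < 0` the term `α rᵐ` drives the solution to `-∞`, so nonnegative solutions have `α ≥ 0`.
-/

open Filter

def SolvesRecurrence (a b c : ℝ) (u : ℕ → ℝ) : Prop :=
  ∀ m, a * (u m + u (m + 2)) + b * u (m + 1) + c = 0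

namespace SolvesRecurrence

variable {a b c : ℝ}

theorem eq_of_eq_of_eq {u v : ℕ → ℝ} (ha : a ≠ 0) (hu : SolvesRecurrence a b c u)
    (hv : SolvesRecurrence a b c v) (h0 : u 0 = v 0) (h1 : u 1 = v 1) : u = v := by
  suffices h : ∀ m, u m = v m ∧ u (m + 1) = v (m + 1) from funext fun m => (h m).1
  intro m
  induction m with
  | zero => exact ⟨h0, h1⟩
  | succ m ih =>
    refine ⟨ih.2, mul_left_cancel₀ ha ?_⟩
    linear_combination hu m - hv m - a * ih.1 - b * ih.2

theorem geom_add_geom_add_const {r s : ℝ} (A B C : ℝ) (hr : a * (r ^ 2 + 1) + b * r = 0)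
    (hs : a * (s ^ 2 + 1) + b * s = 0) (hC : (2 * a + b) * C + c = 0) :
    SolvesRecurrence a b c (fun m => A * r ^ m + B * s ^ m + C) := by
  intro m
  linear_combination (A * r ^ m) * hr + (B * s ^ m) * hs + hC

end SolvesRecurrence

theorem inv_isRoot_of_palindromic {a b r : ℝ} (hr0 : r ≠ 0) (hr : a * (r ^ 2 + 1) + b * r = 0) :
    a * (r⁻¹ ^ 2 + 1) + b * r⁻¹ = 0 := by
  field_simp
  linear_combination hr

section Root

variable {Ω r : ℝ}

theorem root_formula_isRoot (h1 : Ω ^ 2 ≤ 1) (h3 : 3 * Ω ^ 2 ≠ 1)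
    (hr : r = (1 + Ω ^ 2 + Real.sqrt (8 * Ω ^ 2 * (1 - Ω ^ 2))) / (1 - 3 * Ω ^ 2)) :
    (3 * Ω ^ 2 - 1) * (r ^ 2 + 1) + 2 * (1 + Ω ^ 2) * r = 0 := by
  have hd : 1 - 3 * Ω ^ 2 ≠ 0 := by contrapose! h3; linarith
  have hsq := Real.sq_sqrt (by positivity : 0 ≤ 8 * Ω ^ 2 * (1 - Ω ^ 2))
  set s := Real.sqrt (8 * Ω ^ 2 * (1 - Ω ^ 2))
  subst hr
  field_simp
  linear_combination (3 * Ω ^ 2 - 1) * hsq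

theorem one_lt_root_formula (h0 : 0 < Ω ^ 2) (h3 : Ω ^ 2 < 1 / 3)
    (hr : r = (1 + Ω ^ 2 + Real.sqrt (8 * Ω ^ 2 * (1 - Ω ^ 2))) / (1 - 3 * Ω ^ 2)) : 1 < r := by
  rw [hr, one_lt_div (by linarith)]
  linarith [Real.sqrt_nonneg (8 * Ω ^ 2 * (1 - Ω ^ 2))]

end Root

noncomputable def closedForm (r K α : ℝ) (m : ℕ) : ℝ :=
  α * (r ^ m - r ^ (-(m : ℤ))) - K * (1 - r ^ (-(m : ℤ)))

namespace closedForm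

variable {r : ℝ} (K α : ℝ)

theorem eq_geom : closedForm r K α = fun m => α * r ^ m + (K - α) * r⁻¹ ^ m + -K := by
  funext m
  simp only [closedForm, zpow_neg, zpow_natCast, inv_pow]
  ring

@[simp] theorem apply_zero : closedForm r K α 0 = 0 := by simp [closedForm]

@[simp] theorem apply_one : closedForm r K α 1 = α * (r - r⁻¹) - K * (1 - r⁻¹) := by
  simp [closedForm]

theorem tendsto_atBot (hr : 1 < r) {α : ℝ} (hα : α < 0) :
    Tendsto (closedForm r K α) atTop atBot := by
  have hpow : Tendsto (fun m : ℕ => α * r ^ m + (|K| - α)) atTop atBot :=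
    tendsto_atBot_add_const_right _ _
      ((tendsto_pow_atTop_atTop_of_one_lt hr).const_mul_atTop_of_neg hα)
  refine tendsto_atBot_mono (fun m => ?_) hpow
  have hinv0 : 0 ≤ r⁻¹ ^ m := by positivity
  have hinv1 : r⁻¹ ^ m ≤ 1 := pow_le_one₀ (by positivity) (inv_le_one_of_one_le₀ hr.le)
  rw [eq_geom]
  nlinarith [neg_abs_le K, le_abs_self K]

end closedForm

theorem statement16 (Ω κ : ℝ) (h1 : 0 < Ω ^ 2) (h2 : Ω ^ 2 < 1 / 3)
    (r : ℝ) (hr : r = (1 + Ω ^ 2 + Real.sqrt (8 * Ω ^ 2 * (1 - Ω ^ 2))) / (1 - 3 * Ω ^ 2)) :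
    1 < r ∧
    (∀ u : ℕ → ℝ,
      (u 0 = 0 ∧
        ∀ m : ℕ, (3 * Ω ^ 2 - 1) * (u m + u (m + 2)) + 2 * (1 + Ω ^ 2) * u (m + 1)
          + 2 * κ = 0) ↔
      (∃ α : ℝ, ∀ m : ℕ,
        u m = α * (r ^ m - r ^ (-(m : ℤ))) - (κ / (4 * Ω ^ 2)) * (1 - r ^ (-(m : ℤ))))) ∧
    (∀ (u : ℕ → ℝ) (α : ℝ),
      u 0 = 0 →
      (∀ m : ℕ, (3 * Ω ^ 2 - 1) * (u m + u (m + 2)) + 2 * (1 + Ω ^ 2) * u (m + 1)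
        + 2 * κ = 0) →
      (∀ m : ℕ,
        u m = α * (r ^ m - r ^ (-(m : ℤ))) - (κ / (4 * Ω ^ 2)) * (1 - r ^ (-(m : ℤ)))) →
      (∀ m : ℕ, 0 ≤ u m) → 0 ≤ α) := by
  set K := κ / (4 * Ω ^ 2)
  have hΩ : Ω ≠ 0 := by rintro rfl; simp at h1
  have hr1 : 1 < r := one_lt_root_formula h1 h2 hr
  have hroot := root_formula_isRoot (Ω := Ω) (by linarith) (by linarith) hr
  have hsol (α : ℝ) : SolvesRecurrence (3 * Ω ^ 2 - 1) (2 * (1 + Ω ^ 2)) (2 * κ)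
      (closedForm r K α) := by
    rw [closedForm.eq_geom]
    refine .geom_add_geom_add_const _ _ _ hroot
      (inv_isRoot_of_palindromic (by positivity) hroot) ?_
    simp only [K]
    field_simp
    ring
  refine ⟨hr1, fun u => ⟨fun ⟨h0, hu⟩ => ?_, fun ⟨α, hα⟩ => ?_⟩, fun u α _ _ hα hnn => ?_⟩
  · have hden : r - r⁻¹ ≠ 0 := by
      have : r⁻¹ < 1 := inv_lt_one_of_one_lt₀ hr1
      linarith
    refine ⟨(u 1 + K * (1 - r⁻¹)) / (r - r⁻¹), fun m => congrFun (?_ : u = closedForm r K _) m⟩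
    refine SolvesRecurrence.eq_of_eq_of_eq (by linarith) hu (hsol _) (by simp [h0]) ?_
    rw [closedForm.apply_one, div_mul_cancel₀ _ hden]
    ring
  · rw [funext hα]
    exact ⟨closedForm.apply_zero _ _, hsol α⟩
  · by_contra! hneg
    obtain ⟨m, hm⟩ := ((closedForm.tendsto_atBot K hr1 hneg).eventually_lt_atBot 0).exists
    exact (hnn m).not_gt (hα m ▸ hm)
end

section
/- Let Ω, κ ∈ ℝ with 1/3 < Ω² < 1, and set r = (1 + Ω² + √(8Ω²(1−Ω²)))/(1 − 3Ω²). Then r < −1, and a sequence u : ℕ → ℝ satisfies u(0) = 0, the recurrence (3Ω² − 1)·(u(m) + u(m+2)) + 2·(1+Ω²)·u(m+1) + 2κ = 0 for every m ∈ ℕ, and u(m) ≥ 0 for all m ∈ ℕ, if and only if κ ≤ 0 and u(m) = −(κ/(4Ω²))·(1 − r^(−m)) for all m ∈ ℕ. -/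
/-!
Put `a = 3Ω² - 1 > 0` and `b = 1 + Ω²`. The recurrence has the constant solution
`c = -κ / (4Ω²)`, and its characteristic polynomial `a x² + 2 b x + a` is palindromic with
roots `r < -1` and `r⁻¹ ∈ (-1, 0)`, so every solution is `c + α rᵐ + β r⁻ᵐ`. Since `r` is
negative and `|r| > 1`, the term `α rᵐ` takes arbitrarily negative values unless `α = 0`,
while the rest stays bounded; so a nonnegative solution has `α = 0`, then `u 0 = 0` forces
`β = -c`, and `u 1 = c (1 - r⁻¹) ≥ 0` forces `c ≥ 0`.
-/

theorem exists_eq_mul_pow_add_mul_pow {K : Type*} [Field K] {r s : K} (hrs : r ≠ s)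
    {v : ℕ → K} (hv : ∀ m, v (m + 2) = (r + s) * v (m + 1) - r * s * v m) :
    ∃ α β : K, ∀ m, v m = α * r ^ m + β * s ^ m := by
  have hrs' : r - s ≠ 0 := sub_ne_zero.mpr hrs
  refine ⟨(v 1 - s * v 0) / (r - s), (r * v 0 - v 1) / (r - s), fun m => ?_⟩
  induction m using Nat.twoStepInduction with
  | zero => field_simp; ring
  | one => field_simp; ring
  | more m ih₀ ih₁ => rw [hv, ih₀, ih₁]; ring

theorem exists_mul_pow_lt_of_lt_neg_one {r α : ℝ} (hr : r < -1) (hα : α ≠ 0) (C : ℝ) :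
    ∃ m, α * r ^ m < C := by
  have hα' : 0 < |α| := abs_pos.mpr hα
  have hr' : 1 < |r| := by rw [abs_of_neg (by linarith)]; linarith
  obtain ⟨n, hn⟩ := pow_unbounded_of_one_lt (|C| / |α|) hr'
  have hbig : |C| < |α * r ^ n| := by
    rwa [abs_mul, abs_pow, ← div_lt_iff₀' hα']
  rcases lt_or_gt_of_ne (mul_ne_zero hα (pow_ne_zero n (by linarith : r ≠ 0))) with hneg | hpos
  · refine ⟨n, ?_⟩
    rw [abs_of_neg hneg] at hbig
    linarith [neg_abs_le C]
  · -- one more factor `r < -1` flips the sign without shrinking the modulus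
    refine ⟨n + 1, ?_⟩
    rw [abs_of_pos hpos] at hbig
    have : α * r ^ (n + 1) = r * (α * r ^ n) := by ring
    nlinarith [neg_abs_le C]

theorem palindromic_quadratic_inv {a b r : ℝ} (h : a * r ^ 2 + 2 * b * r + a = 0) :
    a * r⁻¹ ^ 2 + 2 * b * r⁻¹ + a = 0 := by
  rcases eq_or_ne r 0 with rfl | hr
  · simpa using h
  · field_simp
    linear_combination h

section Recurrence

variable {a b κ c r : ℝ} {u : ℕ → ℝ}

theorem exists_eq_const_add_mul_pow_add_mul_inv_pow (ha : a ≠ 0)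
    (hroot : a * r ^ 2 + 2 * b * r + a = 0) (hr : r ^ 2 ≠ 1) (hc : (a + b) * c + κ = 0)
    (hu : ∀ m, a * (u m + u (m + 2)) + 2 * b * u (m + 1) + 2 * κ = 0) :
    ∃ α β, ∀ m, u m = c + α * r ^ m + β * r⁻¹ ^ m := by
  have hr0 : r ≠ 0 := by rintro rfl; simp [ha] at hroot
  have hsum : r + r⁻¹ = -(2 * b / a) := by
    field_simp
    linear_combination hroot
  have hne : r ≠ r⁻¹ := fun h => hr (by field_simp at h; linear_combination h)
  obtain ⟨α, β, hαβ⟩ := exists_eq_mul_pow_add_mul_pow hne (v := fun m => u m - c) fun m => by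
    rw [hsum, mul_inv_cancel₀ hr0]
    field_simp
    linear_combination hu m - 2 * hc
  exact ⟨α, β, fun m => by linear_combination hαβ m⟩

theorem recurrence_nonneg_iff (ha : a ≠ 0) (hroot : a * r ^ 2 + 2 * b * r + a = 0)
    (hr : r < -1) (hc : (a + b) * c + κ = 0) :
    (u 0 = 0 ∧ (∀ m, a * (u m + u (m + 2)) + 2 * b * u (m + 1) + 2 * κ = 0) ∧
        ∀ m, 0 ≤ u m) ↔
      0 ≤ c ∧ ∀ m, u m = c * (1 - r⁻¹ ^ m) := by
  have hinv : |r⁻¹| < 1 := by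
    rw [abs_inv]; exact inv_lt_one_of_one_lt₀ (by rw [abs_of_neg (by linarith)]; linarith)
  have hpow_le : ∀ m, |r⁻¹ ^ m| ≤ 1 := fun m => by
    rw [abs_pow]; exact pow_le_one₀ (abs_nonneg _) hinv.le
  constructor
  · rintro ⟨h0, hu, hpos⟩
    obtain ⟨α, β, hαβ⟩ := exists_eq_const_add_mul_pow_add_mul_inv_pow ha hroot
      (by nlinarith) hc hu
    have hα : α = 0 := by
      by_contra hα
      obtain ⟨m, hm⟩ := exists_mul_pow_lt_of_lt_neg_one hr hα (-(c + |β|))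
      have hβ : |β * r⁻¹ ^ m| ≤ |β| := by
        rw [abs_mul]; exact mul_le_of_le_one_right (abs_nonneg _) (hpow_le m)
      linarith [hpos m, hαβ m, le_abs_self (β * r⁻¹ ^ m)]
    have hβ : β = -c := by linear_combination h0 - hαβ 0 - hα
    have hu' : ∀ m, u m = c * (1 - r⁻¹ ^ m) := fun m => by rw [hαβ, hα, hβ]; ring
    have h1 : 0 < 1 - r⁻¹ := by linarith [le_abs_self r⁻¹]
    refine ⟨nonneg_of_mul_nonneg_left ?_ h1, hu'⟩
    simpa [hu'] using hpos 1
  · rintro ⟨hc0, hu⟩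
    refine ⟨by simp [hu], fun m => ?_, fun m => ?_⟩
    · rw [hu, hu, hu]
      linear_combination 2 * hc - c * r⁻¹ ^ m * palindromic_quadratic_inv hroot
    · rw [hu]
      exact mul_nonneg hc0 (by linarith [le_abs_self (r⁻¹ ^ m), hpow_le m])

end Recurrence

theorem vacuum_ratio_lt_neg_one {Ω r : ℝ} (h1 : 1 / 3 < Ω ^ 2) (h2 : Ω ^ 2 < 1)
    (hr : r = (1 + Ω ^ 2 + √(8 * Ω ^ 2 * (1 - Ω ^ 2))) / (1 - 3 * Ω ^ 2)) : r < -1 := by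
  rw [hr]
  rw [div_lt_iff_of_neg (by linarith)]
  linarith [Real.sqrt_nonneg (8 * Ω ^ 2 * (1 - Ω ^ 2))]

theorem vacuum_ratio_isRoot {Ω r : ℝ} (h1 : 1 / 3 < Ω ^ 2) (h2 : Ω ^ 2 < 1)
    (hr : r = (1 + Ω ^ 2 + √(8 * Ω ^ 2 * (1 - Ω ^ 2))) / (1 - 3 * Ω ^ 2)) :
    (3 * Ω ^ 2 - 1) * r ^ 2 + 2 * (1 + Ω ^ 2) * r + (3 * Ω ^ 2 - 1) = 0 := by
  have hsq := Real.sq_sqrt (by nlinarith : 0 ≤ 8 * Ω ^ 2 * (1 - Ω ^ 2))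
  have : 1 - 3 * Ω ^ 2 ≠ 0 := by linarith
  rw [hr]
  generalize √(8 * Ω ^ 2 * (1 - Ω ^ 2)) = q at hsq
  field_simp
  linear_combination (3 * Ω ^ 2 - 1) * hsq

theorem statement17 (Ω κ : ℝ) (h1 : 1 / 3 < Ω ^ 2) (h2 : Ω ^ 2 < 1)
    (r : ℝ) (hr : r = (1 + Ω ^ 2 + Real.sqrt (8 * Ω ^ 2 * (1 - Ω ^ 2))) / (1 - 3 * Ω ^ 2)) :
    r < -1 ∧
    (∀ u : ℕ → ℝ,
      (u 0 = 0 ∧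
        (∀ m : ℕ, (3 * Ω ^ 2 - 1) * (u m + u (m + 2)) + 2 * (1 + Ω ^ 2) * u (m + 1)
          + 2 * κ = 0) ∧
        (∀ m : ℕ, 0 ≤ u m)) ↔
      (κ ≤ 0 ∧ ∀ m : ℕ, u m = -(κ / (4 * Ω ^ 2)) * (1 - r ^ (-(m : ℤ))))) := by
  have hΩ : 0 < 4 * Ω ^ 2 := by linarith
  have hr_lt := vacuum_ratio_lt_neg_one h1 h2 hr
  have hc : (3 * Ω ^ 2 - 1 + (1 + Ω ^ 2)) * -(κ / (4 * Ω ^ 2)) + κ = 0 := by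
    rw [show 3 * Ω ^ 2 - 1 + (1 + Ω ^ 2) = 4 * Ω ^ 2 by ring, mul_neg,
      mul_div_cancel₀ _ hΩ.ne', neg_add_cancel]
  refine ⟨hr_lt, fun u => ?_⟩
  rw [recurrence_nonneg_iff (by linarith) (vacuum_ratio_isRoot h1 h2 hr) hr_lt hc,
    neg_nonneg, div_le_iff₀ hΩ, zero_mul]
  simp only [zpow_neg, zpow_natCast, inv_pow]
end

section
/- Let Ω, κ ∈ ℝ with Ω² = 1. A sequence u : ℕ → ℝ satisfies u(0) = 0, the recurrence (3Ω² − 1)·(u(m) + u(m+2)) + 2·(1+Ω²)·u(m+1) + 2κ = 0 (i.e. u(m) + 2·u(m+1) + u(m+2) + κ = 0) for every m ∈ ℕ, and u(m) ≥ 0 for all m ∈ ℕ, if and only if κ ≤ 0 and u(m) = −(κ/4)·(1 − (−1)^m) for all m ∈ ℕ. -/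
theorem statement18 (Ω κ : ℝ) (hΩ : Ω ^ 2 = 1) (u : ℕ → ℝ) :
    (u 0 = 0 ∧
      (∀ m : ℕ, (3 * Ω ^ 2 - 1) * (u m + u (m + 2)) + 2 * (1 + Ω ^ 2) * u (m + 1)
        + 2 * κ = 0) ∧
      (∀ m : ℕ, 0 ≤ u m)) ↔
    (κ ≤ 0 ∧ ∀ m : ℕ, u m = -(κ / 4) * (1 - (-1 : ℝ) ^ m)) := by
  constructor
  · rintro ⟨h0, hrec, hpos⟩
    have hrec' : ∀ m : ℕ, u m + 2 * u (m + 1) + u (m + 2) + κ = 0 := by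
      intro m
      have := hrec m
      rw [hΩ] at this
      linarith
    set c : ℝ := u 1 + κ / 2 with hc
    clear_value c
    have key : ∀ k : ℕ, u (2 * k) = -(2 * k) * c ∧ u (2 * k + 1) = u 1 + 2 * k * c := by
      intro k
      induction k with
      | zero => simp [h0]
      | succ n ih =>
        obtain ⟨he, ho⟩ := ih
        have h1 := hrec' (2 * n)
        have h2 := hrec' (2 * n + 1)
        rw [show 2 * n + 1 + 1 = 2 * n + 2 by omega,
          show 2 * n + 1 + 2 = 2 * n + 3 by omega] at h2
        rw [show 2 * (n + 1) = 2 * n + 2 by omega,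
          show 2 * n + 2 + 1 = 2 * n + 3 by omega]
        push_cast
        constructor <;> linarith [he, ho, h1, h2, hc]
    have hcle : c ≤ 0 := by
      have := (key 1).1
      have h2 := hpos 2
      simp at this
      nlinarith
    have hcge : 0 ≤ c := by
      by_contra h
      push_neg at h
      obtain ⟨k, hk⟩ := exists_nat_gt (u 1 / (-2 * c))
      have hp := hpos (2 * k + 1)
      rw [(key k).2] at hp
      have h2c : 0 < -2 * c := by linarith
      have : u 1 / (-2 * c) < k := hk
      have : u 1 < k * (-2 * c) := by
        rwa [div_lt_iff₀ h2c] at this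
      nlinarith
    have hc0 : c = 0 := le_antisymm hcle hcge
    have hu1 : u 1 = -κ / 2 := by
      rw [hc] at hc0; linarith
    have hκ : κ ≤ 0 := by have := hpos 1; rw [hu1] at this; linarith
    refine ⟨hκ, fun m => ?_⟩
    rcases Nat.even_or_odd m with ⟨k, hk⟩ | ⟨k, hk⟩
    · have := (key k).1
      rw [hc0] at this
      have hm : m = 2 * k := by omega
      rw [hm, this]
      rw [pow_mul]
      simp
    · have := (key k).2
      rw [hc0] at this
      have hm : m = 2 * k + 1 := by omega
      rw [hm, this, hu1, pow_succ, pow_mul]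
      simp
      ring
  · rintro ⟨hκ, hu⟩
    refine ⟨by rw [hu 0]; simp, fun m => ?_, fun m => ?_⟩
    · rw [hu m, hu (m + 1), hu (m + 2), hΩ]
      rw [pow_succ, pow_succ]
      ring
    · rw [hu m]
      rcases Nat.even_or_odd m with ⟨k, hk⟩ | ⟨k, hk⟩
      · have : ((-1 : ℝ)) ^ m = 1 := by
          rw [show m = 2 * k by omega, pow_mul]; simp
        rw [this]; simp
      · have : ((-1 : ℝ)) ^ m = -1 := by
          rw [show m = 2 * k + 1 by omega, pow_succ, pow_mul]; simp
        rw [this]; nlinarith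
end

section
/- Let Ω ∈ ℝ with 0 < Ω² < 1 and Ω² ≠ 1/3. Suppose v : ℕ → ℝ satisfies v(0) = 0 and the recurrence (3Ω² − 1)·(m·v(m) + (m+3)·v(m+2)) + (1+Ω²)·(2m+3)·v(m+1) = 0 for every m ∈ ℕ. Then for every m ∈ ℕ: v(m+1) = [(1+Ω²)²·v(1)/(4·√π·Ω²·(1−Ω²))] · [Γ(3/2)·Γ(m+3/2)/(Γ(m/2+3/2)·Γ(m/2+2))] · ((1+Ω²)/(1−3Ω²))^m · Σ_{k=0}^{m+2} [(−m/2−1/2)_k · (−m/2−1)_k / ((−m−1/2)_k · k!)] · ((1−3Ω²)²/(1+Ω²)²)^k, where the finite sum is the terminating Gauss hypergeometric series ₂F₁(−m/2−1/2, −m/2−1; −m−1/2; (1−3Ω²)²/(1+Ω²)²). -/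
/-!
Put t = (1 + Ω²)/(1 - 3Ω²). Divided by 1 - 3Ω², the recurrence at m + 1 reads
(m + 4) v(m + 3) = (2m + 5) t v(m + 2) - (m + 1) v(m + 1), and at m = 0 it gives v(2) = t v(1),
so the sequence v(m + 1) is determined by v(1). The claimed solution is g(m) t^m F_m(t⁻²), where
g is the Gamma ratio and F_m the terminating ₂F₁. It satisfies the same recurrence because
(m + 3) g(m + 1) = (2m + 3) g(m) and the F_m obey the contiguous relation
(2m + 3)(2m + 5)(F_{m+1} - F_{m+2}) = (m + 1)(m + 3) z F_m. This relation is checked one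
coefficient at a time, using the two Pochhammer shifts (a)_{k+1} = (a)_k (a + k) = a (a + 1)_k.
The prefactor comes from F_0(z) = 1 - z and 1 - t⁻² = 8Ω²(1 - Ω²)/(1 + Ω²)².
-/

open Finset Polynomial Real

lemma ascPochhammer_eval_eq_prod_range {S : Type*} [CommSemiring S] (n : ℕ) (r : S) :
    (ascPochhammer S n).eval r = ∏ j ∈ range n, (r + j) := by
  induction n with
  | zero => simp
  | succ n ih => rw [ascPochhammer_succ_eval, ih, prod_range_succ]

lemma ascPochhammer_succ_left_eval {S : Type*} [CommSemiring S] (n : ℕ) (r : S) :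
    (ascPochhammer S (n + 1)).eval r = r * (ascPochhammer S n).eval (r + 1) := by
  simp [ascPochhammer_succ_left, eval_comp]

lemma ascPochhammer_eval_neg_sub_half_ne_zero (n k : ℕ) :
    (ascPochhammer ℝ k).eval (-(n : ℝ) - 1 / 2) ≠ 0 := by
  rw [Ne, ascPochhammer_eval_eq_zero_iff]
  rintro ⟨j, -, hj⟩
  have : ((2 * j : ℕ) : ℝ) = (2 * n + 1 : ℕ) := by push_cast; linarith
  have := Nat.cast_injective this
  omega

section
variable {𝕂 : Type*} [Field 𝕂]

lemma ordinaryHypergeometricCoefficient_succ_sub_one (a b c : 𝕂) (k : ℕ) :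
    ordinaryHypergeometricCoefficient b (a - 1) (c - 1) (k + 1)
      = (a - 1) * (b + k) / ((c - 1) * (k + 1)) * ordinaryHypergeometricCoefficient a b c k := by
  rw [ordinaryHypergeometricCoefficient, ascPochhammer_succ_eval k b,
    ascPochhammer_succ_left_eval _ (a - 1), ascPochhammer_succ_left_eval _ (c - 1),
    sub_add_cancel, sub_add_cancel, Nat.factorial_succ, Nat.cast_mul, Nat.cast_succ]
  simp only [mul_inv, div_eq_mul_inv]
  ring

lemma ordinaryHypergeometricCoefficient_sub_one (a b c : 𝕂) (k : ℕ)
    (hc : (ascPochhammer 𝕂 (k + 1)).eval (c - 1) ≠ 0) :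
    (a - 1 + k) * (c - 1) * ordinaryHypergeometricCoefficient b (a - 1) (c - 1) k
      = (a - 1) * (c - 1 + k) * ordinaryHypergeometricCoefficient a b c k := by
  have shift (x : 𝕂) : (ascPochhammer 𝕂 k).eval (x - 1) * (x - 1 + k)
      = (x - 1) * (ascPochhammer 𝕂 k).eval x := by
    rw [← ascPochhammer_succ_eval, ascPochhammer_succ_left_eval, sub_add_cancel]
  have hD : (ascPochhammer 𝕂 k).eval (c - 1) ≠ 0 := by
    rw [ascPochhammer_succ_eval] at hc; exact left_ne_zero_of_mul hc
  have hC : (ascPochhammer 𝕂 k).eval c ≠ 0 := by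
    rw [ascPochhammer_succ_left_eval, sub_add_cancel] at hc; exact right_ne_zero_of_mul hc
  simp only [ordinaryHypergeometricCoefficient]
  field_simp
  congr 1
  linear_combination ((ascPochhammer 𝕂 k).eval b * (c - 1) * (ascPochhammer 𝕂 k).eval c) * shift a
    - ((ascPochhammer 𝕂 k).eval b * (a - 1) * (ascPochhammer 𝕂 k).eval a) * shift c

end

lemma eq_of_linear_recurrence_two {R : Type*} [CommRing R] [IsDomain R] {p q r u w : ℕ → R}
    (hp : ∀ n, p n ≠ 0)
    (hu : ∀ n, p n * u (n + 2) + q n * u (n + 1) + r n * u n = 0)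
    (hw : ∀ n, p n * w (n + 2) + q n * w (n + 1) + r n * w n = 0)
    (h0 : u 0 = w 0) (h1 : u 1 = w 1) : u = w := by
  have key (n : ℕ) : u n = w n ∧ u (n + 1) = w (n + 1) := by
    induction n with
    | zero => exact ⟨h0, h1⟩
    | succ n ih =>
      refine ⟨ih.2, mul_left_cancel₀ (hp n) ?_⟩
      linear_combination hu n - hw n - q n * ih.2 - r n * ih.1
  exact funext fun n => (key n).1

noncomputable def vacuumCoeff (m k : ℕ) : ℝ :=
  ordinaryHypergeometricCoefficient (-(m : ℝ) / 2 - 1 / 2) (-(m : ℝ) / 2 - 1) (-(m : ℝ) - 1 / 2) k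

lemma vacuumCoeff_eq_prod (m k : ℕ) :
    vacuumCoeff m k =
      (∏ j ∈ range k, (-(m : ℝ) / 2 - 1 / 2 + (j : ℝ)))
        * (∏ j ∈ range k, (-(m : ℝ) / 2 - 1 + (j : ℝ)))
        / ((∏ j ∈ range k, (-(m : ℝ) - 1 / 2 + (j : ℝ))) * (Nat.factorial k : ℝ)) := by
  simp only [vacuumCoeff, ordinaryHypergeometricCoefficient, ascPochhammer_eval_eq_prod_range]
  ring

lemma vacuumCoeff_succ_eq (m k : ℕ) :
    vacuumCoeff (m + 1) k = ordinaryHypergeometricCoefficient (-(m : ℝ) / 2 - 1)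
      ((-(m : ℝ) / 2 - 1 / 2) - 1) ((-(m : ℝ) - 1 / 2) - 1) k := by
  have ha : -((m + 1 : ℕ) : ℝ) / 2 - 1 / 2 = -(m : ℝ) / 2 - 1 := by push_cast; ring
  have hb : -((m + 1 : ℕ) : ℝ) / 2 - 1 = (-(m : ℝ) / 2 - 1 / 2) - 1 := by push_cast; ring
  have hc : -((m + 1 : ℕ) : ℝ) - 1 / 2 = (-(m : ℝ) - 1 / 2) - 1 := by push_cast; ring
  rw [vacuumCoeff, ha, hb, hc]

lemma vacuumCoeff_zero_right (m : ℕ) : vacuumCoeff m 0 = 1 := by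
  simp [vacuumCoeff, ordinaryHypergeometricCoefficient]

lemma vacuumCoeff_eq_zero {m k : ℕ} (hk : m / 2 + 2 ≤ k) : vacuumCoeff m k = 0 := by
  obtain ⟨a, rfl | rfl⟩ := Nat.even_or_odd' m
  · have hb : -((2 * a : ℕ) : ℝ) / 2 - 1 = -((a + 1 : ℕ) : ℝ) := by push_cast; ring
    have hk' : a + 1 < k := by omega
    rw [vacuumCoeff, ordinaryHypergeometricCoefficient, hb,
      ascPochhammer_eval_neg_coe_nat_of_lt hk', mul_zero, zero_mul]
  · have ha : -((2 * a + 1 : ℕ) : ℝ) / 2 - 1 / 2 = -((a + 1 : ℕ) : ℝ) := by push_cast; ring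
    have hk' : a + 1 < k := by omega
    rw [vacuumCoeff, ordinaryHypergeometricCoefficient, ha,
      ascPochhammer_eval_neg_coe_nat_of_lt hk', mul_zero, zero_mul, zero_mul]

lemma vacuumCoeff_succ_succ (m k : ℕ) :
    2 * (2 * m + 3) * (k + 1) * vacuumCoeff (m + 1) (k + 1)
      = (m + 3) * (2 * k - m - 2) * vacuumCoeff m k := by
  have hc : (-(m : ℝ) - 1 / 2) - 1 = -(2 * m + 3) / 2 := by ring
  rw [vacuumCoeff_succ_eq, ordinaryHypergeometricCoefficient_succ_sub_one, ← vacuumCoeff, hc]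
  field_simp
  ring

lemma vacuumCoeff_succ (m k : ℕ) :
    (2 * m + 3) * (2 * k - m - 3) * vacuumCoeff (m + 1) k
      = (m + 3) * (2 * k - 2 * m - 3) * vacuumCoeff m k := by
  have hc : (ascPochhammer ℝ (k + 1)).eval ((-(m : ℝ) - 1 / 2) - 1) ≠ 0 := by
    convert ascPochhammer_eval_neg_sub_half_ne_zero (m + 1) (k + 1) using 2
    push_cast; ring
  rw [vacuumCoeff_succ_eq, vacuumCoeff]
  linear_combination (-4) * ordinaryHypergeometricCoefficient_sub_one
    (-(m : ℝ) / 2 - 1 / 2) (-(m : ℝ) / 2 - 1) (-(m : ℝ) - 1 / 2) k hc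

lemma vacuumCoeff_contiguous (n k : ℕ) :
    (2 * n + 3) * (2 * n + 5) * vacuumCoeff (n + 2) (k + 1) + (n + 1) * (n + 3) * vacuumCoeff n k
      = (2 * n + 3) * (2 * n + 5) * vacuumCoeff (n + 1) (k + 1) := by
  have h₂ := vacuumCoeff_succ_succ (n + 1) k
  have h₁ := vacuumCoeff_succ_succ n k
  have h := vacuumCoeff_succ n k
  push_cast at h₂
  refine mul_left_cancel₀ (show (2 * (k + 1) : ℝ) ≠ 0 by positivity) ?_
  linear_combination (2 * n + 3) * h₂ - (2 * n + 5) * h₁ + (n + 4) * h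

noncomputable def vacuumPoly (m : ℕ) (z : ℝ) : ℝ :=
  ∑ k ∈ range (m + 3), vacuumCoeff m k * z ^ k

lemma vacuumPoly_eq_sum_range {m N : ℕ} (hN : m + 3 ≤ N) (z : ℝ) :
    vacuumPoly m z = ∑ k ∈ range N, vacuumCoeff m k * z ^ k := by
  refine sum_subset (range_subset_range.2 hN) fun k _ hk => ?_
  rw [vacuumCoeff_eq_zero (by rw [mem_range] at hk; omega), zero_mul]

lemma vacuumPoly_contiguous (n : ℕ) (z : ℝ) :
    (2 * n + 3) * (2 * n + 5) * vacuumPoly (n + 2) z + (n + 1) * (n + 3) * z * vacuumPoly n z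
      = (2 * n + 3) * (2 * n + 5) * vacuumPoly (n + 1) z := by
  rw [vacuumPoly_eq_sum_range (m := n + 2) (N := n + 5) le_rfl,
    vacuumPoly_eq_sum_range (m := n + 1) (N := n + 5) (by omega),
    vacuumPoly_eq_sum_range (m := n) (N := n + 4) (by omega),
    sum_range_succ' (fun k => vacuumCoeff (n + 2) k * z ^ k),
    sum_range_succ' (fun k => vacuumCoeff (n + 1) k * z ^ k),
    vacuumCoeff_zero_right, vacuumCoeff_zero_right]
  have hsum : ∑ k ∈ range (n + 4), ((2 * n + 3) * (2 * n + 5) * (vacuumCoeff (n + 2) (k + 1)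
        * z ^ (k + 1)) + (n + 1) * (n + 3) * z * (vacuumCoeff n k * z ^ k))
      = ∑ k ∈ range (n + 4), (2 * n + 3) * (2 * n + 5) * (vacuumCoeff (n + 1) (k + 1)
        * z ^ (k + 1)) :=
    sum_congr rfl fun k _ => by linear_combination z ^ (k + 1) * vacuumCoeff_contiguous n k
  rw [sum_add_distrib, ← mul_sum, ← mul_sum, ← mul_sum] at hsum
  linear_combination hsum

lemma vacuumPoly_zero (z : ℝ) : vacuumPoly 0 z = 1 - z := by
  have h2 : vacuumCoeff 0 2 = 0 := vacuumCoeff_eq_zero le_rfl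
  rw [vacuumPoly, sum_range_succ, sum_range_succ, sum_range_one, h2]
  norm_num [vacuumCoeff, ordinaryHypergeometricCoefficient, sub_eq_add_neg]

lemma vacuumPoly_one (z : ℝ) : vacuumPoly 1 z = 1 - z := by
  have h2 : vacuumCoeff 1 2 = 0 := vacuumCoeff_eq_zero le_rfl
  have h3 : vacuumCoeff 1 3 = 0 := vacuumCoeff_eq_zero (by norm_num)
  rw [vacuumPoly, sum_range_succ, sum_range_succ, sum_range_succ, sum_range_one, h2, h3]
  norm_num [vacuumCoeff, ordinaryHypergeometricCoefficient, sub_eq_add_neg]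

noncomputable def vacuumGamma (m : ℕ) : ℝ :=
  Gamma (3 / 2) * Gamma (m + 3 / 2) / (Gamma (m / 2 + 3 / 2) * Gamma (m / 2 + 2))

lemma vacuumGamma_succ (m : ℕ) : (m + 3) * vacuumGamma (m + 1) = (2 * m + 3) * vacuumGamma m := by
  have e1 : ((m + 1 : ℕ) : ℝ) + 3 / 2 = (m + 3 / 2) + 1 := by push_cast; ring
  have e2 : ((m + 1 : ℕ) : ℝ) / 2 + 3 / 2 = m / 2 + 2 := by push_cast; ring
  have e3 : ((m + 1 : ℕ) : ℝ) / 2 + 2 = (m / 2 + 3 / 2) + 1 := by push_cast; ring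
  have g3 := Gamma_pos_of_pos (show (0 : ℝ) < m / 2 + 3 / 2 by positivity)
  have g4 := Gamma_pos_of_pos (show (0 : ℝ) < m / 2 + 2 by positivity)
  rw [vacuumGamma, vacuumGamma, e1, e2, e3, Gamma_add_one (by positivity),
    Gamma_add_one (by positivity)]
  field_simp

lemma vacuumGamma_zero : vacuumGamma 0 = √π / 2 := by
  have h : Gamma (3 / 2) = √π / 2 := by
    rw [show (3 / 2 : ℝ) = 1 / 2 + 1 by norm_num, Gamma_add_one (by norm_num), Gamma_one_half_eq]
    ring
  norm_num [vacuumGamma, Gamma_two, h]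

noncomputable def vacuumProfile (t : ℝ) (m : ℕ) : ℝ :=
  vacuumGamma m * t ^ m * vacuumPoly m (t⁻¹ ^ 2)

lemma vacuumProfile_zero (t : ℝ) : vacuumProfile t 0 = √π / 2 * (1 - t⁻¹ ^ 2) := by
  rw [vacuumProfile, vacuumGamma_zero, vacuumPoly_zero, pow_zero, mul_one]

lemma vacuumProfile_one (t : ℝ) : vacuumProfile t 1 = t * vacuumProfile t 0 := by
  have h : vacuumGamma 1 = vacuumGamma 0 := by simpa using vacuumGamma_succ 0
  rw [vacuumProfile, vacuumProfile, h, vacuumPoly_one, vacuumPoly_zero]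
  ring

lemma vacuumProfile_recurrence {t : ℝ} (ht : t ≠ 0) (n : ℕ) :
    (n + 4) * vacuumProfile t (n + 2) - (2 * n + 5) * t * vacuumProfile t (n + 1)
      + (n + 1) * vacuumProfile t n = 0 := by
  have hg₂ := vacuumGamma_succ (n + 1)
  have hg₁ := vacuumGamma_succ n
  have hF := vacuumPoly_contiguous n (t⁻¹ ^ 2)
  have htz : t ^ 2 * t⁻¹ ^ 2 = 1 := by rw [← mul_pow, mul_inv_cancel₀ ht, one_pow]
  push_cast at hg₂
  refine mul_left_cancel₀ (show (2 * n + 3 : ℝ) ≠ 0 by positivity) ?_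
  simp only [vacuumProfile]
  linear_combination ((2 * n + 3) * t ^ (n + 2) * vacuumPoly (n + 2) (t⁻¹ ^ 2)) * hg₂
    + (vacuumGamma (n + 1) * t ^ (n + 2)) * hF
    - ((n + 1) * t ^ n * vacuumPoly n (t⁻¹ ^ 2)) * hg₁
    - ((n + 1) * (n + 3) * vacuumGamma (n + 1) * t ^ n * vacuumPoly n (t⁻¹ ^ 2)) * htz

lemma eq_mul_vacuumProfile {t C : ℝ} {v : ℕ → ℝ} (ht : t ≠ 0)
    (hrec : ∀ n : ℕ, (n + 4) * v (n + 3) = (2 * n + 5) * t * v (n + 2) - (n + 1) * v (n + 1))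
    (h1 : v 1 = C * vacuumProfile t 0) (h2 : v 2 = t * v 1) (n : ℕ) :
    v (n + 1) = C * vacuumProfile t n := by
  have h := eq_of_linear_recurrence_two (u := fun n => v (n + 1))
    (w := fun n => C * vacuumProfile t n) (p := fun n : ℕ => (n + 4 : ℝ))
    (q := fun n => -((2 * n + 5) * t)) (r := fun n => n + 1) (fun n => by positivity)
    (fun n => by linear_combination hrec n)
    (fun n => by linear_combination C * vacuumProfile_recurrence ht n) h1
    (by rw [vacuumProfile_one]; linear_combination h2 + t * h1)
  exact congrFun h n

theorem statement19_general (Ω : ℝ) (h1 : 0 < Ω ^ 2) (h2 : Ω ^ 2 < 1) (h3 : Ω ^ 2 ≠ 1 / 3)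
    (v : ℕ → ℝ)
    (hrec : ∀ m : ℕ,
      (3 * Ω ^ 2 - 1) * ((m : ℝ) * v m + ((m : ℝ) + 3) * v (m + 2))
        + (1 + Ω ^ 2) * (2 * (m : ℝ) + 3) * v (m + 1) = 0) :
    ∀ m : ℕ,
      v (m + 1) =
        ((1 + Ω ^ 2) ^ 2 * v 1 / (4 * Real.sqrt Real.pi * Ω ^ 2 * (1 - Ω ^ 2)))
        * (Real.Gamma (3 / 2) * Real.Gamma ((m : ℝ) + 3 / 2)
            / (Real.Gamma ((m : ℝ) / 2 + 3 / 2) * Real.Gamma ((m : ℝ) / 2 + 2)))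
        * ((1 + Ω ^ 2) / (1 - 3 * Ω ^ 2)) ^ m
        * ∑ k ∈ Finset.range (m + 3),
            ((∏ j ∈ Finset.range k, (-(m : ℝ) / 2 - 1 / 2 + (j : ℝ)))
              * (∏ j ∈ Finset.range k, (-(m : ℝ) / 2 - 1 + (j : ℝ)))
              / ((∏ j ∈ Finset.range k, (-(m : ℝ) - 1 / 2 + (j : ℝ)))
                  * (Nat.factorial k : ℝ)))
            * ((1 - 3 * Ω ^ 2) ^ 2 / (1 + Ω ^ 2) ^ 2) ^ k := by
  have ha : 1 - 3 * Ω ^ 2 ≠ 0 := fun h => h3 (by linarith)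
  obtain ⟨t, ht⟩ : ∃ t, (1 + Ω ^ 2) / (1 - 3 * Ω ^ 2) = t := ⟨_, rfl⟩
  have hat : (1 - 3 * Ω ^ 2) * t = 1 + Ω ^ 2 := by rw [← ht, mul_div_cancel₀ _ ha]
  have hz : (1 - 3 * Ω ^ 2) ^ 2 / (1 + Ω ^ 2) ^ 2 = t⁻¹ ^ 2 := by rw [← ht, inv_div, div_pow]
  have hv1 : v 1 = (1 + Ω ^ 2) ^ 2 * v 1 / (4 * √π * Ω ^ 2 * (1 - Ω ^ 2))
      * vacuumProfile t 0 := by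
    have : Ω ≠ 0 := by rintro rfl; simp at h1
    have : 1 - Ω ^ 2 ≠ 0 := by linarith
    rw [vacuumProfile_zero, ← ht]
    field_simp
    ring
  have hred (n : ℕ) :
      (n + 4) * v (n + 3) = (2 * n + 5) * t * v (n + 2) - (n + 1) * v (n + 1) := by
    have h := hrec (n + 1)
    push_cast at h
    refine mul_left_cancel₀ ha ?_
    linear_combination -h - (2 * n + 5) * v (n + 2) * hat
  have hv2 : v 2 = t * v 1 := by
    refine mul_left_cancel₀ ha ?_
    linear_combination -hrec 0 / 3 - v 1 * hat
  have ht0 : t ≠ 0 := by rw [← ht]; exact div_ne_zero (by positivity) ha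
  intro m
  simp only [← vacuumCoeff_eq_prod, ht, hz]
  rw [eq_mul_vacuumProfile ht0 hred hv1 hv2 m, vacuumProfile, vacuumPoly, vacuumGamma]
  ring

theorem statement19 (Ω : ℝ) (h1 : 0 < Ω ^ 2) (h2 : Ω ^ 2 < 1) (h3 : Ω ^ 2 ≠ 1 / 3)
    (v : ℕ → ℝ) (hv0 : v 0 = 0)
    (hrec : ∀ m : ℕ,
      (3 * Ω ^ 2 - 1) * ((m : ℝ) * v m + ((m : ℝ) + 3) * v (m + 2))
        + (1 + Ω ^ 2) * (2 * (m : ℝ) + 3) * v (m + 1) = 0) :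
    ∀ m : ℕ,
      v (m + 1) =
        ((1 + Ω ^ 2) ^ 2 * v 1 / (4 * Real.sqrt Real.pi * Ω ^ 2 * (1 - Ω ^ 2)))
        * (Real.Gamma (3 / 2) * Real.Gamma ((m : ℝ) + 3 / 2)
            / (Real.Gamma ((m : ℝ) / 2 + 3 / 2) * Real.Gamma ((m : ℝ) / 2 + 2)))
        * ((1 + Ω ^ 2) / (1 - 3 * Ω ^ 2)) ^ m
        * ∑ k ∈ Finset.range (m + 3),
            ((∏ j ∈ Finset.range k, (-(m : ℝ) / 2 - 1 / 2 + (j : ℝ)))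
              * (∏ j ∈ Finset.range k, (-(m : ℝ) / 2 - 1 + (j : ℝ)))
              / ((∏ j ∈ Finset.range k, (-(m : ℝ) - 1 / 2 + (j : ℝ)))
                  * (Nat.factorial k : ℝ)))
            * ((1 - 3 * Ω ^ 2) ^ 2 / (1 + Ω ^ 2) ^ 2) ^ k :=
  statement19_general Ω h1 h2 h3 v hrec
end
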